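/- arXiv:math/9712274 — 8 statements merged into one kernel-verified Lean document; each statement's English description precedes it below -/
import Mathlib

section
/- Let G be a topological group and let V₀, V₁ ⊆ G be regular open sets. Then the set {g ∈ G : V₀ · g = V₁} is closed in G. -/
/-! A right translation is a homeomorphism, so it maps the regular open set `V₀` onto `V₁`
exactly when it maps `closure V₀` onto `closure V₁`. For closed sets `F₀, F₁`, the condition
`F₀ * g = F₁` is the conjunction of `c * g ∈ F₁` for all `c ∈ F₀` and `d * g⁻¹ ∈ F₀` for all
`d ∈ F₁`, an intersection of closed conditions on `g`. -/

open Set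

theorem IsHomeomorph.image_eq_iff_image_closure_eq {X Y : Type*} [TopologicalSpace X]
    [TopologicalSpace Y] {f : X → Y} (hf : IsHomeomorph f) {U : Set X} {V : Set Y}
    (hU : interior (closure U) = U) (hV : interior (closure V) = V) :
    f '' U = V ↔ f '' closure U = closure V := by
  refine ⟨fun h => by rw [hf.image_closure, h], fun h => ?_⟩
  rw [← hU, hf.image_interior, h, hV]

theorem isClosed_setOf_image_mul_right_subset {M : Type*} [Mul M] [TopologicalSpace M]
    [ContinuousMul M] (s : Set M) {t : Set M} (ht : IsClosed t) :
    IsClosed {g : M | (· * g) '' s ⊆ t} := by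
  have : {g : M | (· * g) '' s ⊆ t} = ⋂ c ∈ s, (c * ·) ⁻¹' t := by
    ext g
    simp [subset_def]
  rw [this]
  exact isClosed_biInter fun c _ => ht.preimage (continuous_const_mul c)

theorem subset_image_mul_right_iff {G : Type*} [Group G] (s t : Set G) (g : G) :
    t ⊆ (· * g) '' s ↔ (· * g⁻¹) '' t ⊆ s := by
  rw [image_mul_right, image_subset_iff]

theorem isClosed_setOf_image_mul_right_eq {G : Type*} [Group G] [TopologicalSpace G]
    [IsTopologicalGroup G] {s t : Set G} (hs : IsClosed s) (ht : IsClosed t) :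
    IsClosed {g : G | (· * g) '' s = t} := by
  have hsup : IsClosed {g : G | t ⊆ (· * g) '' s} := by
    simp_rw [subset_image_mul_right_iff]
    exact (isClosed_setOf_image_mul_right_subset t hs).preimage continuous_inv
  simp_rw [subset_antisymm_iff]
  exact (isClosed_setOf_image_mul_right_subset s ht).inter hsup

theorem stmt_1 {G : Type*} [Group G] [TopologicalSpace G] [IsTopologicalGroup G]
    (V₀ V₁ : Set G)
    (h₀ : interior (closure V₀) = V₀) (h₁ : interior (closure V₁) = V₁) :
    IsClosed {g : G | (fun v => v * g) '' V₀ = V₁} := by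
  have hcl : {g : G | (fun v => v * g) '' V₀ = V₁} =
      {g : G | (· * g) '' closure V₀ = closure V₁} := by
    ext g
    exact (Homeomorph.mulRight g).isHomeomorph.image_eq_iff_image_closure_eq h₀ h₁
  rw [hcl]
  exact isClosed_setOf_image_mul_right_eq isClosed_closure isClosed_closure
end

section
/- S∞ divides Aut(ℚ, <): there is a closed subgroup H of the group Aut(ℚ,<) of order-automorphisms of the rationals (with the topology of pointwise convergence) and a continuous surjective group homomorphism from H onto S∞. -/
/-- The topology of pointwise convergence on the permutation group of a set `α`
(viewed as discrete), induced by `σ ↦ (⇑σ, ⇑σ.symm)`. -/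
def permTop (α : Type*) : TopologicalSpace (Equiv.Perm α) :=
  letI : TopologicalSpace α := ⊥
  TopologicalSpace.induced
    (fun σ : Equiv.Perm α => ((⇑σ : α → α), (⇑σ.symm : α → α))) inferInstance

/-- `Aut(ℚ, <)`: the subgroup of `Sym(ℚ)` consisting of order-preserving permutations. -/
def AutQ : Subgroup (Equiv.Perm ℚ) where
  carrier := {σ | StrictMono ⇑σ}
  mul_mem' := fun {a b} ha hb => by
    simpa [Equiv.Perm.coe_mul] using ha.comp hb
  one_mem' := by simpa using strictMono_id
  inv_mem' := fun {σ} hσ => by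
    intro p q hpq
    refine hσ.lt_iff_lt.mp ?_
    simpa using hpq


noncomputable section SInftyAux

/-- A coloring of `ℚ` by naturals: the multiplicity of `2` in the denominator. -/
def col (q : ℚ) : ℕ := q.den.factorization 2

lemma col_dense (n : ℕ) {a b : ℚ} (hab : a < b) : ∃ q, a < q ∧ q < b ∧ col q = n := by
  obtain ⟨k, hk⟩ := pow_unbounded_of_one_lt (R := ℚ) (8 / ((b - a) * 2 ^ n))
    (by norm_num : (1:ℚ) < 3)
  set d : ℕ := 2 ^ n * 3 ^ k with hd
  have hdpos : 0 < d := by positivity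
  have hdq : (0:ℚ) < (d:ℚ) := by exact_mod_cast hdpos
  have hgap : 8 < (b - a) * d := by
    have h1 : (0:ℚ) < (b - a) * 2 ^ n := by
      have : (0:ℚ) < b - a := by linarith
      positivity
    have h2 : 8 / ((b - a) * 2 ^ n) * ((b - a) * 2 ^ n) < 3 ^ k * ((b - a) * 2 ^ n) := by
      exact mul_lt_mul_of_pos_right hk h1
    rw [div_mul_cancel₀ _ h1.ne'] at h2
    have : ((d:ℚ)) = 2 ^ n * 3 ^ k := by push_cast [hd]; ring
    calc (8:ℚ) < 3 ^ k * ((b - a) * 2 ^ n) := h2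
    _ = (b - a) * d := by rw [this]; ring
  set x : ℚ := a * d with hx
  set m : ℤ := 6 * ⌊x / 6⌋ + 7 with hm
  have hm1 : x < (m : ℚ) := by
    have := Int.sub_one_lt_floor (x / 6)
    have h6 : (6:ℚ) * (x / 6 - 1) < 6 * (⌊x / 6⌋ : ℚ) := by linarith
    push_cast [hm]
    nlinarith [h6]
  have hm2 : (m : ℚ) < b * d := by
    have h1 : ((⌊x / 6⌋ : ℤ) : ℚ) ≤ x / 6 := Int.floor_le _
    have : (m:ℚ) ≤ x + 7 := by push_cast [hm]; linarith
    have hbd : x + 8 < b * d := by rw [hx]; nlinarith [hgap]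
    linarith
  -- coprimality
  have h2m : ¬ (2:ℤ) ∣ m := by omega
  have h3m : ¬ (3:ℤ) ∣ m := by omega
  have hcop : m.natAbs.Coprime d := by
    have c2 : Nat.Coprime m.natAbs 2 := by
      rw [Nat.coprime_comm]
      refine (Nat.Prime.coprime_iff_not_dvd Nat.prime_two).mpr fun h => h2m ?_
      rwa [← Int.natAbs_dvd_natAbs (a := (2:ℤ)) (b := m)]
    have c3 : Nat.Coprime m.natAbs 3 := by
      rw [Nat.coprime_comm]
      refine (Nat.Prime.coprime_iff_not_dvd Nat.prime_three).mpr fun h => h3m ?_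
      rwa [← Int.natAbs_dvd_natAbs (a := (3:ℤ)) (b := m)]
    exact Nat.Coprime.mul_right (c2.pow_right n) (c3.pow_right k)
  refine ⟨⟨m, d, hdpos.ne', hcop⟩, ?_, ?_, ?_⟩
  · rw [Rat.mk_eq_divInt, Rat.divInt_eq_div, Int.cast_natCast, lt_div_iff₀ hdq]
    exact hm1
  · rw [Rat.mk_eq_divInt, Rat.divInt_eq_div, Int.cast_natCast, div_lt_iff₀ hdq]
    exact hm2
  · show (Rat.mk' m d hdpos.ne' hcop).den.factorization 2 = n
    have hden : (Rat.mk' m d hdpos.ne' hcop).den = d := rfl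
    rw [hden, hd, Nat.factorization_mul (by positivity) (by positivity)]
    rw [Nat.Prime.factorization_pow Nat.prime_two,
      Nat.Prime.factorization_pow Nat.prime_three]
    simp

/-- A point of each color. -/
def pick (n : ℕ) : ℚ := (col_dense n one_pos).choose

lemma pick_col (n : ℕ) : col (pick n) = n := (col_dense n one_pos).choose_spec.2.2

end SInftyAux


noncomputable section BF

lemma col_exists_between (n : ℕ) (lo hi : Finset ℚ)
    (h : ∀ x ∈ lo, ∀ y ∈ hi, x < y) :
    ∃ m : ℚ, col m = n ∧ (∀ x ∈ lo, x < m) ∧ ∀ y ∈ hi, m < y := by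
  by_cases nlo : lo.Nonempty
  · by_cases nhi : hi.Nonempty
    · obtain ⟨m, h1, h2, h3⟩ := col_dense n (h _ (lo.max'_mem nlo) _ (hi.min'_mem nhi))
      exact ⟨m, h3, fun x hx => (lo.le_max' x hx).trans_lt h1,
        fun y hy => h2.trans_le (hi.min'_le y hy)⟩
    · obtain ⟨m, h1, _, h3⟩ := col_dense n (lt_add_one (lo.max' nlo))
      exact ⟨m, h3, fun x hx => (lo.le_max' x hx).trans_lt h1,
        fun y hy => absurd ⟨y, hy⟩ nhi⟩
  · by_cases nhi : hi.Nonempty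
    · obtain ⟨m, h1, h2, h3⟩ :=
        col_dense n (show hi.min' nhi - 1 < hi.min' nhi by linarith)
      exact ⟨m, h3, fun x hx => absurd ⟨x, hx⟩ nlo,
        fun y hy => h2.trans_le (hi.min'_le y hy)⟩
    · exact ⟨pick n, pick_col n, fun x hx => absurd ⟨x, hx⟩ nlo,
        fun y hy => absurd ⟨y, hy⟩ nhi⟩

/-- Colored partial isomorphisms. -/
def CPI (f : Equiv.Perm ℕ) : Type :=
  { s : Finset (ℚ × ℚ) //
    (∀ p ∈ s, ∀ q ∈ s, cmp (Prod.fst p) (Prod.fst q) = cmp (Prod.snd p) (Prod.snd q)) ∧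
    ∀ p ∈ s, col (Prod.snd p) = f (col (Prod.fst p)) }

namespace CPI

variable (f : Equiv.Perm ℕ)

instance : Inhabited (CPI f) :=
  ⟨⟨∅, ⟨fun _ h => absurd h (Finset.notMem_empty _),
    fun _ h => absurd h (Finset.notMem_empty _)⟩⟩⟩

instance : Preorder (CPI f) := Subtype.preorder _

variable {f}

theorem exists_across (s : CPI f) (a : ℚ) :
    ∃ b : ℚ, col b = f (col a) ∧ ∀ p ∈ s.val, cmp (Prod.fst p) a = cmp (Prod.snd p) b := by
  by_cases h : ∃ b, (a, b) ∈ s.val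
  · obtain ⟨b, hb⟩ := h
    exact ⟨b, s.prop.2 _ hb, fun p hp => s.prop.1 _ hp _ hb⟩
  have key :
      ∀ x ∈ (s.val.filter fun p : ℚ × ℚ => p.fst < a).image Prod.snd,
        ∀ y ∈ (s.val.filter fun p : ℚ × ℚ => a < p.fst).image Prod.snd, x < y := by
    intro x hx y hy
    rw [Finset.mem_image] at hx hy
    rcases hx with ⟨p, hp1, rfl⟩
    rcases hy with ⟨q, hq1, rfl⟩
    rw [Finset.mem_filter] at hp1 hq1
    rw [← lt_iff_lt_of_cmp_eq_cmp (s.prop.1 _ hp1.1 _ hq1.1)]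
    exact lt_trans hp1.right hq1.right
  obtain ⟨b, hcol, hb1, hb2⟩ := col_exists_between (f (col a)) _ _ key
  refine ⟨b, hcol, ?_⟩
  rintro ⟨p1, p2⟩ hp
  have hne : p1 ≠ a := fun he => h ⟨p2, he ▸ hp⟩
  rcases lt_or_gt_of_ne hne with hl | hr
  · have : p1 < a ∧ p2 < b :=
      ⟨hl, hb1 _ (Finset.mem_image.mpr ⟨(p1, p2), Finset.mem_filter.mpr ⟨hp, hl⟩, rfl⟩)⟩
    rw [← cmp_eq_lt_iff, ← cmp_eq_lt_iff] at this
    exact this.1.trans this.2.symm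
  · have : a < p1 ∧ b < p2 :=
      ⟨hr, hb2 _ (Finset.mem_image.mpr ⟨(p1, p2), Finset.mem_filter.mpr ⟨hp, hr⟩, rfl⟩)⟩
    rw [← cmp_eq_gt_iff, ← cmp_eq_gt_iff] at this
    exact this.1.trans this.2.symm

theorem exists_across' (s : CPI f) (b : ℚ) :
    ∃ a : ℚ, col b = f (col a) ∧ ∀ p ∈ s.val, cmp (Prod.snd p) b = cmp (Prod.fst p) a := by
  by_cases h : ∃ a, (a, b) ∈ s.val
  · obtain ⟨a, ha⟩ := h
    exact ⟨a, s.prop.2 _ ha, fun p hp => (s.prop.1 _ hp _ ha).symm⟩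
  have key :
      ∀ x ∈ (s.val.filter fun p : ℚ × ℚ => p.snd < b).image Prod.fst,
        ∀ y ∈ (s.val.filter fun p : ℚ × ℚ => b < p.snd).image Prod.fst, x < y := by
    intro x hx y hy
    rw [Finset.mem_image] at hx hy
    rcases hx with ⟨p, hp1, rfl⟩
    rcases hy with ⟨q, hq1, rfl⟩
    rw [Finset.mem_filter] at hp1 hq1
    rw [lt_iff_lt_of_cmp_eq_cmp (s.prop.1 _ hp1.1 _ hq1.1)]
    exact lt_trans hp1.right hq1.right
  obtain ⟨a, hcol, ha1, ha2⟩ := col_exists_between (f.symm (col b)) _ _ key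
  refine ⟨a, by rw [hcol, Equiv.apply_symm_apply], ?_⟩
  rintro ⟨p1, p2⟩ hp
  have hne : p2 ≠ b := fun he => h ⟨p1, he ▸ hp⟩
  rcases lt_or_gt_of_ne hne with hl | hr
  · have : p2 < b ∧ p1 < a :=
      ⟨hl, ha1 _ (Finset.mem_image.mpr ⟨(p1, p2), Finset.mem_filter.mpr ⟨hp, hl⟩, rfl⟩)⟩
    rw [← cmp_eq_lt_iff, ← cmp_eq_lt_iff] at this
    exact this.1.trans this.2.symm
  · have : b < p2 ∧ a < p1 :=
      ⟨hr, ha2 _ (Finset.mem_image.mpr ⟨(p1, p2), Finset.mem_filter.mpr ⟨hp, hr⟩, rfl⟩)⟩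
    rw [← cmp_eq_gt_iff, ← cmp_eq_gt_iff] at this
    exact this.1.trans this.2.symm

variable (f)

/-- Partial isomorphisms defined at `a` on the left. -/
def definedAtLeft (a : ℚ) : Order.Cofinal (CPI f) where
  carrier := {s | ∃ b : ℚ, (a, b) ∈ s.val}
  isCofinal s := by
    obtain ⟨b, hcol, a_b⟩ := exists_across s a
    refine ⟨⟨insert (a, b) s.val, ⟨fun p hp q hq => ?_, fun p hp => ?_⟩⟩,
      ⟨b, Finset.mem_insert_self _ _⟩, Finset.subset_insert _ _⟩
    · rw [Finset.mem_insert] at hp hq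
      rcases hp with (rfl | pf) <;> rcases hq with (rfl | qf)
      · simp only [cmp_self_eq_eq]
      · rw [cmp_eq_cmp_symm]
        exact a_b _ qf
      · exact a_b _ pf
      · exact s.prop.1 _ pf _ qf
    · rw [Finset.mem_insert] at hp
      rcases hp with (rfl | pf)
      · exact hcol
      · exact s.prop.2 _ pf

/-- Partial isomorphisms defined at `b` on the right. -/
def definedAtRight (b : ℚ) : Order.Cofinal (CPI f) where
  carrier := {s | ∃ a : ℚ, (a, b) ∈ s.val}
  isCofinal s := by
    obtain ⟨a, hcol, b_a⟩ := exists_across' s b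
    refine ⟨⟨insert (a, b) s.val, ⟨fun p hp q hq => ?_, fun p hp => ?_⟩⟩,
      ⟨a, Finset.mem_insert_self _ _⟩, Finset.subset_insert _ _⟩
    · rw [Finset.mem_insert] at hp hq
      rcases hp with (rfl | pf) <;> rcases hq with (rfl | qf)
      · simp only [cmp_self_eq_eq]
      · rw [cmp_eq_cmp_symm]
        exact (b_a _ qf).symm
      · exact (b_a _ pf).symm
      · exact s.prop.1 _ pf _ qf
    · rw [Finset.mem_insert] at hp
      rcases hp with (rfl | pf)
      · exact hcol
      · exact s.prop.2 _ pf

end CPI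

/-- The colored back-and-forth: every permutation of the colors is realized
by an order automorphism of `ℚ`. -/
theorem exists_good_perm (f : Equiv.Perm ℕ) :
    ∃ σ : Equiv.Perm ℚ, StrictMono ⇑σ ∧ ∀ q, col (σ q) = f (col q) := by
  classical
  let to_cofinal : ℚ ⊕ ℚ → Order.Cofinal (CPI f) := fun p =>
    Sum.recOn p (CPI.definedAtLeft f) (CPI.definedAtRight f)
  let I : Order.Ideal (CPI f) := Order.idealOfCofinals default to_cofinal
  have hF : ∀ a : ℚ, ∃ b, ∃ s, s ∈ I ∧ (a, b) ∈ s.val := by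
    intro a
    obtain ⟨s, ⟨b, hb⟩, hsI⟩ :=
      Order.cofinal_meets_idealOfCofinals default to_cofinal (Sum.inl a)
    exact ⟨b, s, hsI, hb⟩
  have hG : ∀ b : ℚ, ∃ a, ∃ s, s ∈ I ∧ (a, b) ∈ s.val := by
    intro b
    obtain ⟨s, ⟨a, ha⟩, hsI⟩ :=
      Order.cofinal_meets_idealOfCofinals default to_cofinal (Sum.inr b)
    exact ⟨a, s, hsI, ha⟩
  choose F s1 hs1 hmem1 using hF
  choose G s2 hs2 hmem2 using hG
  have key : ∀ a b : ℚ, cmp a (G b) = cmp (F a) b := by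
    intro a b
    obtain ⟨m, _, fm, gm⟩ := I.directed _ (hs1 a) _ (hs2 b)
    exact m.prop.1 (a, F a) (fm (hmem1 a)) (G b, b) (gm (hmem2 b))
  let e : ℚ ≃o ℚ := OrderIso.ofCmpEqCmp F G key
  refine ⟨e.toEquiv, e.strictMono, fun q => ?_⟩
  show col (F q) = f (col q)
  exact (s1 q).prop.2 _ (hmem1 q)

end BF

noncomputable section Grp

/-- The subgroup of color-respecting order automorphisms. -/
def Hgrp : Subgroup AutQ where
  carrier := {σ : AutQ | ∃ f : Equiv.Perm ℕ,
    ∀ q : ℚ, col ((σ : Equiv.Perm ℚ) q) = f (col q)}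
  one_mem' := ⟨1, fun q => by simp⟩
  mul_mem' := by
    rintro a b ⟨fa, ha⟩ ⟨fb, hb⟩
    exact ⟨fa * fb, fun q => by
      simp only [Subgroup.coe_mul, Equiv.Perm.mul_apply, ha, hb]⟩
  inv_mem' := by
    rintro a ⟨fa, ha⟩
    refine ⟨fa⁻¹, fun q => ?_⟩
    have h1 := ha ((a : Equiv.Perm ℚ)⁻¹ q)
    rw [show (a : Equiv.Perm ℚ) ((a : Equiv.Perm ℚ)⁻¹ q) = q from Equiv.apply_symm_apply _ _] at h1
    rw [show ((a⁻¹ : AutQ) : Equiv.Perm ℚ) = ((a : Equiv.Perm ℚ))⁻¹ from rfl, h1]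
    simp

lemma mem_Hgrp_iff {τ : AutQ} :
    τ ∈ Hgrp ↔ ∃ f : Equiv.Perm ℕ,
      ∀ q : ℚ, col ((τ : Equiv.Perm ℚ) q) = f (col q) := Iff.rfl

lemma perm_unique {σ : Equiv.Perm ℚ} {f g : Equiv.Perm ℕ}
    (hf : ∀ q, col (σ q) = f (col q)) (hg : ∀ q, col (σ q) = g (col q)) : f = g := by
  ext n
  have := (hf (pick n)).symm.trans (hg (pick n))
  rwa [pick_col] at this

/-- The homomorphism extracting the color permutation. -/
def piHom : Hgrp →* Equiv.Perm ℕ where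
  toFun σ := (mem_Hgrp_iff.mp σ.2).choose
  map_one' := perm_unique (mem_Hgrp_iff.mp (1 : Hgrp).2).choose_spec (fun q => by simp)
  map_mul' a b := by
    refine perm_unique (mem_Hgrp_iff.mp (a * b).2).choose_spec (fun q => ?_)
    have ha := (mem_Hgrp_iff.mp a.2).choose_spec
      ((((b : AutQ) : Equiv.Perm ℚ)) q)
    have hb := (mem_Hgrp_iff.mp b.2).choose_spec q
    calc col ((((a * b : Hgrp) : AutQ) : Equiv.Perm ℚ) q)
        = col (((a : AutQ) : Equiv.Perm ℚ) (((b : AutQ) : Equiv.Perm ℚ) q)) := rfl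
      _ = (mem_Hgrp_iff.mp a.2).choose (col (((b : AutQ) : Equiv.Perm ℚ) q)) := ha
      _ = (mem_Hgrp_iff.mp a.2).choose ((mem_Hgrp_iff.mp b.2).choose (col q)) := by rw [hb]
      _ = ((mem_Hgrp_iff.mp a.2).choose * (mem_Hgrp_iff.mp b.2).choose) (col q) := rfl

lemma piHom_spec (σ : Hgrp) (q : ℚ) :
    col (((σ : AutQ) : Equiv.Perm ℚ) q) = piHom σ (col q) :=
  (mem_Hgrp_iff.mp σ.2).choose_spec q

lemma piHom_surj : Function.Surjective ⇑piHom := by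
  intro f
  obtain ⟨σ, hmono, hcol⟩ := exists_good_perm f
  have hmem : σ ∈ AutQ := hmono
  refine ⟨⟨⟨σ, hmem⟩, ⟨f, hcol⟩⟩, ?_⟩
  exact perm_unique (piHom_spec ⟨⟨σ, hmem⟩, ⟨f, hcol⟩⟩) hcol |>.symm ▸ rfl

end Grp

section Top
open Topology

/-- Evaluation is continuous for `permTop`. -/
lemma permTop_apply_continuous {α : Type*} (x : α) :
    Continuous[permTop α, ⊥] (fun σ : Equiv.Perm α => σ x) := by
  letI : TopologicalSpace α := ⊥
  letI : TopologicalSpace (Equiv.Perm α) := permTop α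
  have h1 : Continuous
      (fun σ : Equiv.Perm α => ((⇑σ, ⇑σ.symm) : (α → α) × (α → α))) :=
    continuous_induced_dom
  exact ((continuous_apply x).comp continuous_fst).comp h1

lemma permTop_symm_apply_continuous {α : Type*} (x : α) :
    Continuous[permTop α, ⊥] (fun σ : Equiv.Perm α => σ.symm x) := by
  letI : TopologicalSpace α := ⊥
  letI : TopologicalSpace (Equiv.Perm α) := permTop α
  have h1 : Continuous
      (fun σ : Equiv.Perm α => ((⇑σ, ⇑σ.symm) : (α → α) × (α → α))) :=
    continuous_induced_dom
  exact ((continuous_apply x).comp continuous_snd).comp h1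

lemma Hgrp_closed :
    letI : TopologicalSpace (Equiv.Perm ℚ) := permTop ℚ
    IsClosed ((Hgrp : Set AutQ)) := by
  letI : TopologicalSpace (Equiv.Perm ℚ) := permTop ℚ
  letI tQ : TopologicalSpace ℚ := ⊥
  haveI : DiscreteTopology ℚ := ⟨rfl⟩
  have hopen1 : ∀ x y : ℚ, IsOpen {τ : AutQ | (τ : Equiv.Perm ℚ) x = y} := by
    intro x y
    have c1 : Continuous fun τ : AutQ => (τ : Equiv.Perm ℚ) x :=
      (permTop_apply_continuous x).comp continuous_subtype_val
    exact c1.isOpen_preimage {y} (isOpen_discrete _)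
  have hopen2 : ∀ x y : ℚ, IsOpen {τ : AutQ | (τ : Equiv.Perm ℚ).symm x = y} := by
    intro x y
    have c1 : Continuous fun τ : AutQ => (τ : Equiv.Perm ℚ).symm x :=
      (permTop_symm_apply_continuous x).comp continuous_subtype_val
    exact c1.isOpen_preimage {y} (isOpen_discrete _)
  refine isClosed_of_closure_subset fun σ hσ => ?_
  rw [mem_closure_iff] at hσ
  -- approximate on two points: forward version
  have fwd : ∀ q q' : ℚ, col q = col q' →
      col ((σ : Equiv.Perm ℚ) q) = col ((σ : Equiv.Perm ℚ) q') := by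
    intro q q' hqq'
    obtain ⟨τ, ⟨h1, h2⟩, hτ⟩ := hσ _
      ((hopen1 q ((σ : Equiv.Perm ℚ) q)).inter (hopen1 q' ((σ : Equiv.Perm ℚ) q')))
      ⟨rfl, rfl⟩
    obtain ⟨g, hg⟩ := hτ
    rw [← h1, ← h2, hg, hg, hqq']
  have bwd : ∀ q q' : ℚ, col q = col q' →
      col ((σ : Equiv.Perm ℚ).symm q) = col ((σ : Equiv.Perm ℚ).symm q') := by
    intro q q' hqq'
    obtain ⟨τ, ⟨h1, h2⟩, hτ⟩ := hσ _
      ((hopen2 q ((σ : Equiv.Perm ℚ).symm q)).inter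
        (hopen2 q' ((σ : Equiv.Perm ℚ).symm q')))
      ⟨rfl, rfl⟩
    obtain ⟨g, hg⟩ := hτ
    have key : ∀ r : ℚ, g (col ((τ : Equiv.Perm ℚ).symm r)) = col r := by
      intro r
      rw [← hg ((τ : Equiv.Perm ℚ).symm r), Equiv.apply_symm_apply]
    have : g (col ((τ : Equiv.Perm ℚ).symm q)) = g (col ((τ : Equiv.Perm ℚ).symm q')) := by
      rw [key, key, hqq']
    have := g.injective this
    rwa [h1, h2] at this
  set F : ℕ → ℕ := fun n => col ((σ : Equiv.Perm ℚ) (pick n)) with hF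
  set G : ℕ → ℕ := fun n => col ((σ : Equiv.Perm ℚ).symm (pick n)) with hG
  have hAgen : ∀ q : ℚ, col ((σ : Equiv.Perm ℚ) q) = F (col q) := by
    intro q
    rw [hF]
    exact fwd q (pick (col q)) (pick_col (col q)).symm
  have hBgen : ∀ q : ℚ, col ((σ : Equiv.Perm ℚ).symm q) = G (col q) := by
    intro q
    rw [hG]
    exact bwd q (pick (col q)) (pick_col (col q)).symm
  have hGF : ∀ n, G (F n) = n := by
    intro n
    have := hBgen ((σ : Equiv.Perm ℚ) (pick n))
    rw [Equiv.symm_apply_apply, pick_col] at this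
    exact this.symm
  have hFG : ∀ n, F (G n) = n := by
    intro n
    have := hAgen ((σ : Equiv.Perm ℚ).symm (pick n))
    rw [Equiv.apply_symm_apply, pick_col] at this
    exact this.symm
  exact ⟨⟨F, G, hGF, hFG⟩, hAgen⟩

lemma piHom_apply (σ : Hgrp) (n : ℕ) :
    piHom σ n = col (((σ : AutQ) : Equiv.Perm ℚ) (pick n)) := by
  rw [piHom_spec σ (pick n), pick_col]

lemma piHom_symm_apply (σ : Hgrp) (n : ℕ) :
    (piHom σ).symm n = col (((σ : AutQ) : Equiv.Perm ℚ).symm (pick n)) := by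
  have h1 : (piHom σ).symm = piHom σ⁻¹ := by
    rw [map_inv]; rfl
  have h2 : (((σ⁻¹ : Hgrp) : AutQ) : Equiv.Perm ℚ) = ((σ : AutQ) : Equiv.Perm ℚ)⁻¹ := rfl
  rw [h1, piHom_apply σ⁻¹ n, h2]
  rfl

lemma piHom_cont :
    letI : TopologicalSpace (Equiv.Perm ℚ) := permTop ℚ
    letI : TopologicalSpace (Equiv.Perm ℕ) := permTop ℕ
    Continuous ⇑piHom := by
  letI : TopologicalSpace (Equiv.Perm ℚ) := permTop ℚ
  letI : TopologicalSpace (Equiv.Perm ℕ) := permTop ℕ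
  letI tQ : TopologicalSpace ℚ := ⊥
  letI tN : TopologicalSpace ℕ := ⊥
  haveI : DiscreteTopology ℚ := ⟨rfl⟩
  rw [show (permTop ℕ : TopologicalSpace (Equiv.Perm ℕ)) =
    TopologicalSpace.induced
      (fun σ : Equiv.Perm ℕ => ((⇑σ : ℕ → ℕ), (⇑σ.symm : ℕ → ℕ))) inferInstance from rfl,
    continuous_induced_rng]
  refine Continuous.prodMk (continuous_pi fun n => ?_) (continuous_pi fun n => ?_)
  · have heq : (fun σ : Hgrp => piHom σ n)
        = (fun q : ℚ => col q) ∘ (fun σ : Hgrp => ((σ : AutQ) : Equiv.Perm ℚ) (pick n)) := by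
      funext σ
      exact piHom_apply σ n
    rw [show (fun σ : Hgrp => (⇑(piHom σ) : ℕ → ℕ) n) = fun σ : Hgrp => piHom σ n from rfl,
      heq]
    exact continuous_of_discreteTopology.comp
      (((permTop_apply_continuous (pick n)).comp continuous_subtype_val).comp
        continuous_subtype_val)
  · have heq : (fun σ : Hgrp => (piHom σ).symm n)
        = (fun q : ℚ => col q) ∘
          (fun σ : Hgrp => ((σ : AutQ) : Equiv.Perm ℚ).symm (pick n)) := by
      funext σ
      exact piHom_symm_apply σ n
    rw [show (fun σ : Hgrp => (⇑(piHom σ).symm : ℕ → ℕ) n)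
      = fun σ : Hgrp => (piHom σ).symm n from rfl, heq]
    exact continuous_of_discreteTopology.comp
      (((permTop_symm_apply_continuous (pick n)).comp continuous_subtype_val).comp
        continuous_subtype_val)

end Top


/-- `S∞` divides `Aut(ℚ,<)`. -/
theorem stmt_5 :
    letI : TopologicalSpace (Equiv.Perm ℚ) := permTop ℚ
    letI : TopologicalSpace (Equiv.Perm ℕ) := permTop ℕ
    ∃ (H : Subgroup AutQ) (π : H →* Equiv.Perm ℕ),
      IsClosed (H : Set AutQ) ∧ Continuous ⇑π ∧ Function.Surjective ⇑π := by
  exact ⟨Hgrp, piHom, Hgrp_closed, piHom_cont, piHom_surj⟩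
end

section
/- Let G be a locally compact Polish group acting continuously on a Polish space X. Then either the set of orbits X/G is countable, or there is a perfect (nonempty, closed, without isolated points) set P ⊆ X of pairwise orbit-inequivalent points; in particular in the latter case X/G has cardinality at least 2^ℵ₀. -/
/-!
The orbit equivalence relation of a σ-compact group is a countable increasing union of closed
sets `F n`. Suppose there are uncountably many orbits. Discarding the open set of points having a
neighbourhood that meets only countably many orbits leaves a nonempty set `D` every relatively
open piece of which meets infinitely many orbits. Inside `D` one builds a Cantor scheme of balls:
at level `n + 1`, centres in pairwise distinct orbits are chosen in the `2 ^ (n + 1)` children,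
and since `F (n + 1)` is closed, balls small enough around them are pairwise `F (n + 1)`-separated.
The map induced by the scheme is then a continuous injection of Cantor space whose values lie in
pairwise distinct orbits; its range is the required perfect set.
-/

open Set Filter Topology Metric MulAction PiNat CantorScheme

instance Pi.perfectSpace {ι β : Type*} [Infinite ι] [TopologicalSpace β] [Nontrivial β] :
    PerfectSpace (ι → β) := by
  classical
  refine perfectSpace_iff_forall_not_isolated.2 fun x => ?_
  choose y hy using fun i => exists_ne (x i)
  have hlim : Tendsto (fun i => Function.update x i (y i)) cofinite (𝓝 x) :=
    tendsto_pi_nhds.2 fun j => tendsto_const_nhds.congr'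
      ((eventually_cofinite_ne j).mono fun i hij => (Function.update_of_ne hij.symm _ _).symm)
  rw [← mem_closure_iff_nhdsWithin_neBot]
  exact mem_closure_of_tendsto hlim
    (Eventually.of_forall fun i h => hy i (by simpa using congrFun h i))

theorem preperfect_range_of_continuous_injective {α β : Type*} [TopologicalSpace α]
    [PerfectSpace α] [TopologicalSpace β] {f : α → β} (hf : Continuous f)
    (hinj : Function.Injective f) : Preperfect (range f) := by
  rintro _ ⟨x, rfl⟩
  have hmaps : MapsTo f {x}ᶜ {f x}ᶜ := fun _ hy hfy => hy (hinj hfy)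
  exact ((PerfectSpace.not_isolated x).map f).mono <|
    le_inf (hf.continuousWithinAt.tendsto_nhdsWithin hmaps)
      (le_principal_iff.2 (mem_map.2 (univ_mem' mem_range_self)))

theorem Set.Finite.exists_injOn_comp_of_infinite_image {ι X Q : Type*} [Nonempty X] (q : X → Q)
    {I : Set ι} (hI : I.Finite) {U : ι → Set X} (hU : ∀ i ∈ I, (q '' U i).Infinite) :
    ∃ x : ι → X, (∀ i ∈ I, x i ∈ U i) ∧ InjOn (q ∘ x) I := by
  classical
  induction I, hI using Set.Finite.induction_on with
  | empty => exact ⟨fun _ => Classical.arbitrary X, by simp, injOn_empty _⟩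
  | @insert a I haI hI ih =>
    obtain ⟨x, hxU, hxinj⟩ := ih fun i hi => hU i (mem_insert_of_mem a hi)
    obtain ⟨_, ⟨y, hyU, rfl⟩, hy⟩ :=
      (hU a (mem_insert a I)).exists_notMem_finite (hI.image (q ∘ x))
    have hagree : EqOn (q ∘ Function.update x a y) (q ∘ x) I := fun i hi => by
      simp [Function.update_of_ne (ne_of_mem_of_not_mem hi haI)]
    refine ⟨Function.update x a y, ?_, (injOn_insert haI).2 ⟨hxinj.congr hagree.symm, ?_⟩⟩
    · rintro i (rfl | hi)
      · simpa using hyU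
      · simpa [Function.update_of_ne (ne_of_mem_of_not_mem hi haI)] using hxU i hi
    · rw [hagree.image_eq, Function.comp_apply, Function.update_self]
      exact hy

theorem exists_nonempty_forall_isOpen_not_countable_image {X Q : Type*} [TopologicalSpace X]
    [SecondCountableTopology X] (q : X → Q) (hq : ¬ (range q).Countable) :
    ∃ D : Set X, D.Nonempty ∧
      ∀ U, IsOpen U → (U ∩ D).Nonempty → ¬ (q '' (U ∩ D)).Countable := by
  set D := {x | ∀ U ∈ 𝓝 x, ¬ (q '' U).Countable}
  have hDc : (q '' Dᶜ).Countable := by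
    have hloc : ∀ x ∈ Dᶜ, ∃ U ∈ 𝓝 x, (q '' U).Countable := by simp [D]
    choose! V hV hVc using hloc
    obtain ⟨t, htD, htc, hcover⟩ := TopologicalSpace.countable_cover_nhdsWithin
      fun x hx => mem_nhdsWithin_of_mem_nhds (hV x hx)
    refine (htc.biUnion fun x hx => hVc x (htD hx)).mono ?_
    exact (image_mono hcover).trans (image_iUnion₂ _ _).subset
  have hsplit : ∀ U : Set X, q '' U ⊆ q '' (U ∩ D) ∪ q '' Dᶜ := fun U => by
    rw [← image_union]
    exact image_mono fun y hy => (em (y ∈ D)).imp (⟨hy, ·⟩) id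
  refine ⟨D, nonempty_iff_ne_empty.2 fun hD => hq ?_, ?_⟩
  · simpa [← image_univ, hD] using hDc
  · rintro U hU ⟨x, hxU, hxD⟩ hc
    exact hxD U (hU.mem_nhds hxU) ((hc.union hDc).mono (hsplit U))

section Scheme

variable {X : Type*} [MetricSpace X]

/-- The balls of level `n` are indexed by the lists of length `n`, newest digit at the head as in
`PiNat.res`. -/
def IsSeparatedLevel (F : Set (X × X)) (D : Set X) (n : ℕ) (c : List Bool → X) (r : ℝ) : Prop :=
  0 < r ∧ r ≤ (1 / 2) ^ n ∧ MapsTo c {l | l.length = n} D ∧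
    {l : List Bool | l.length = n}.Pairwise fun l l' =>
      Disjoint (closedBall (c l) r ×ˢ closedBall (c l') r) F

theorem exists_isSeparatedLevel_succ (s : Setoid X) {F : Set (X × X)} (hF : IsClosed F)
    (hsF : ∀ p ∈ F, s p.1 p.2) {D : Set X}
    (hD : ∀ U, IsOpen U → (U ∩ D).Nonempty → (Quotient.mk s '' (U ∩ D)).Infinite)
    {n : ℕ} {c : List Bool → X} {r : ℝ} (hr : 0 < r) (hc : MapsTo c {l | l.length = n} D) :
    ∃ c' r', IsSeparatedLevel F D (n + 1) c' r' ∧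
      ∀ l a, l.length = n → closedBall (c' (a :: l)) r' ⊆ closedBall (c l) r := by
  have : Nonempty X := ⟨c []⟩
  set I := {l : List Bool | l.length = n + 1}
  have hI : I.Finite := List.finite_length_eq Bool (n + 1)
  obtain ⟨x, hxU, hxinj⟩ := hI.exists_injOn_comp_of_infinite_image (Quotient.mk s)
    (U := fun l => ball (c l.tail) r ∩ D) fun l hl =>
      hD _ isOpen_ball ⟨c l.tail, mem_ball_self hr, hc (by simp_all [I])⟩
  have hfit : ∀ᶠ r' in 𝓝 (0 : ℝ), ∀ l ∈ I, closedBall (x l) r' ⊆ ball (c l.tail) r :=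
    (eventually_all_finite hI).2 fun l hl =>
      eventually_closedBall_subset (isOpen_ball.mem_nhds (hxU l hl).1)
  have hsep : ∀ᶠ r' in 𝓝 (0 : ℝ), ∀ l ∈ I, ∀ l' ∈ I, l ≠ l' →
      closedBall (x l) r' ×ˢ closedBall (x l') r' ⊆ Fᶜ := by
    refine (eventually_all_finite hI).2 fun l hl => (eventually_all_finite hI).2 fun l' hl' =>
      eventually_imp_distrib_left.2 fun hne => ?_
    have hnot : (x l, x l') ∉ F := fun hmem => hne (hxinj hl hl' (Quotient.sound (hsF _ hmem)))
    simpa only [closedBall_prod_same] using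
      eventually_closedBall_subset (hF.isOpen_compl.mem_nhds hnot)
  have hsmall : ∀ᶠ r' in 𝓝 (0 : ℝ), r' < (1 / 2) ^ (n + 1) :=
    Iio_mem_nhds (by positivity)
  obtain ⟨r', hr', hsmall, hfit, hsep⟩ := (hsmall.and (hfit.and hsep)).exists_gt
  refine ⟨x, r', ⟨hr', hsmall.le, fun l hl => (hxU l hl).2, fun l hl l' hl' hne =>
    subset_compl_iff_disjoint_right.1 (hsep l hl l' hl' hne)⟩, fun l a hl => ?_⟩
  exact (hfit (a :: l) (by simp [I, hl])).trans ball_subset_closedBall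

theorem exists_isSeparatedLevel_seq (s : Setoid X) {F : ℕ → Set (X × X)}
    (hF : ∀ n, IsClosed (F n)) (hsF : ∀ n, ∀ p ∈ F n, s p.1 p.2) {D : Set X} (hDne : D.Nonempty)
    (hD : ∀ U, IsOpen U → (U ∩ D).Nonempty → (Quotient.mk s '' (U ∩ D)).Infinite) :
    ∃ (c : ℕ → List Bool → X) (r : ℕ → ℝ), (∀ n, IsSeparatedLevel (F n) D n (c n) (r n)) ∧
      ∀ n l a, l.length = n →
        closedBall (c (n + 1) (a :: l)) (r (n + 1)) ⊆ closedBall (c n l) (r n) := by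
  obtain ⟨d, hd⟩ := hDne
  let Level (n : ℕ) := {p : (List Bool → X) × ℝ // IsSeparatedLevel (F n) D n p.1 p.2}
  have level0 : IsSeparatedLevel (F 0) D 0 (fun _ => d) 1 :=
    ⟨one_pos, by simp, fun _ _ => hd, fun l hl l' hl' hne => (hne (by simp_all)).elim⟩
  have step : ∀ n (p : Level n), ∃ q : Level (n + 1), ∀ l a, l.length = n →
      closedBall (q.1.1 (a :: l)) q.1.2 ⊆ closedBall (p.1.1 l) p.1.2 := fun n p =>
    let ⟨c', r', hq, hnest⟩ := exists_isSeparatedLevel_succ s (hF (n + 1)) (hsF (n + 1)) hD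
      p.2.1 p.2.2.2.1
    ⟨⟨(c', r'), hq⟩, hnest⟩
  choose next hnext using step
  let seq : ∀ n, Level n := fun n => Nat.rec (motive := Level) ⟨(fun _ => d, 1), level0⟩ next n
  exact ⟨fun n => (seq n).1.1, fun n => (seq n).1.2, fun n => (seq n).2, fun n => hnext n (seq n)⟩

theorem exists_continuous_pairwise_not_rel [CompleteSpace X] (s : Setoid X)
    {F : ℕ → Set (X × X)} (hF : ∀ n, IsClosed (F n)) (hF_mono : Monotone F)
    (hsF : ∀ x y, s x y ↔ ∃ n, (x, y) ∈ F n) {D : Set X} (hDne : D.Nonempty)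
    (hD : ∀ U, IsOpen U → (U ∩ D).Nonempty → (Quotient.mk s '' (U ∩ D)).Infinite) :
    ∃ f : (ℕ → Bool) → X, Continuous f ∧ Pairwise fun σ τ => ¬ s (f σ) (f τ) := by
  obtain ⟨c, r, hlevel, hnest⟩ :=
    exists_isSeparatedLevel_seq s hF (fun n p hp => (hsF _ _).2 ⟨n, hp⟩) hDne hD
  let A : List Bool → Set X := fun l => closedBall (c l.length l) (r l.length)
  have hA : ∀ σ n, A (res σ n) = closedBall (c n (res σ n)) (r n) := by simp [A, res_length]
  have hanti : ClosureAntitone A :=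
    CantorScheme.Antitone.closureAntitone (fun l a => hnest _ l a rfl) fun _ => isClosed_closedBall
  have hdiam : VanishingDiam A := fun σ => by
    have hlim : Tendsto (fun n => ENNReal.ofReal (2 * (1 / 2 : ℝ) ^ n)) atTop (𝓝 0) := by
      have hpow := tendsto_pow_atTop_nhds_zero_of_lt_one (r := (1 / 2 : ℝ)) (by norm_num) (by norm_num)
      simpa using ENNReal.tendsto_ofReal (hpow.const_mul 2)
    refine tendsto_of_tendsto_of_tendsto_of_le_of_le tendsto_const_nhds hlim (fun _ => zero_le)
      fun n => ediam_le_of_forall_dist_le fun y hy z hz => ?_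
    rw [hA, mem_closedBall] at hy hz
    linarith [dist_triangle_right y z (c n (res σ n)), (hlevel n).2.1]
  have hdom : (inducedMap A).1 = univ :=
    hanti.map_of_vanishingDiam hdiam fun l => ⟨_, mem_closedBall_self (hlevel _).1.le⟩
  let f : (ℕ → Bool) → X := fun σ => (inducedMap A).2 ⟨σ, hdom ▸ mem_univ σ⟩
  have hfA : ∀ σ n, f σ ∈ closedBall (c n (res σ n)) (r n) := fun σ n => hA σ n ▸ map_mem _ n
  refine ⟨f, hdiam.map_continuous.comp (by fun_prop), fun σ τ hne hrel => ?_⟩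
  obtain ⟨m, hm⟩ := (hsF _ _).1 hrel
  obtain ⟨k, hk⟩ := Function.ne_iff.1 hne
  have hres : res σ (max m (k + 1)) ≠ res τ (max m (k + 1)) :=
    fun h => hk (res_eq_res.1 h (by omega))
  exact disjoint_left.1 ((hlevel _).2.2.2 (res_length σ _) (res_length τ _) hres)
    ⟨hfA σ _, hfA τ _⟩ (hF_mono (le_max_left _ _) hm)

end Scheme

theorem Setoid.countable_quotient_or_exists_continuous_pairwise_not_rel {X : Type*}
    [TopologicalSpace X] [PolishSpace X] (s : Setoid X) {F : ℕ → Set (X × X)}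
    (hF : ∀ n, IsClosed (F n)) (hF_mono : Monotone F) (hsF : ∀ x y, s x y ↔ ∃ n, (x, y) ∈ F n) :
    Countable (Quotient s) ∨
      ∃ f : (ℕ → Bool) → X, Continuous f ∧ Pairwise fun σ τ => ¬ s (f σ) (f τ) := by
  let := TopologicalSpace.upgradeIsCompletelyMetrizable X
  refine or_iff_not_imp_left.2 fun hq => ?_
  have hrange : ¬ (range (Quotient.mk s)).Countable := by
    rwa [Quotient.mk_surjective.range_eq, countable_univ_iff]
  obtain ⟨D, hDne, hD⟩ := exists_nonempty_forall_isOpen_not_countable_image _ hrange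
  exact exists_continuous_pairwise_not_rel s hF hF_mono hsF hDne
    fun U hU hne hfin => hD U hU hne hfin.countable

theorem IsCompact.isClosed_setOf_exists_smul_eq {G X : Type*} [TopologicalSpace G]
    [TopologicalSpace X] [T2Space X] [SMul G X] [ContinuousSMul G X] {K : Set G}
    (hK : IsCompact K) : IsClosed {p : X × X | ∃ g ∈ K, g • p.2 = p.1} := by
  have := isCompact_iff_compactSpace.1 hK
  have himage : {p : X × X | ∃ g ∈ K, g • p.2 = p.1} =
      Prod.snd '' {q : K × (X × X) | (q.1 : G) • q.2.2 = q.2.1} := by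
    ext p
    simp
  rw [himage]
  exact isClosedMap_snd_of_compactSpace _ (isClosed_eq (by fun_prop) (by fun_prop))

theorem exists_isClosed_monotone_iff_orbitRel (G X : Type*) [Group G] [TopologicalSpace G]
    [SigmaCompactSpace G] [TopologicalSpace X] [T2Space X] [MulAction G X] [ContinuousSMul G X] :
    ∃ F : ℕ → Set (X × X), (∀ n, IsClosed (F n)) ∧ Monotone F ∧
      ∀ x y, orbitRel G X x y ↔ ∃ n, (x, y) ∈ F n := by
  refine ⟨fun n => {p | ∃ g ∈ compactCovering G n, g • p.2 = p.1},
    fun n => (isCompact_compactCovering G n).isClosed_setOf_exists_smul_eq,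
    fun m n hmn p ⟨g, hg, hgp⟩ => ⟨g, compactCovering_subset G hmn hg, hgp⟩, fun x y => ?_⟩
  simp only [orbitRel_apply, mem_orbit_iff, mem_ofPred_eq]
  exact ⟨fun ⟨g, hg⟩ => (mem_iUnion.1 (iUnion_compactCovering G ▸ mem_univ g)).imp
    fun n hn => ⟨g, hn, hg⟩, fun ⟨_, g, _, hg⟩ => ⟨g, hg⟩⟩

theorem stmt_7_general {G X : Type*} [Group G] [TopologicalSpace G]
    [PolishSpace G] [LocallyCompactSpace G] [TopologicalSpace X] [PolishSpace X]
    [MulAction G X] [ContinuousSMul G X] :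
    Set.Countable {s : Set X | ∃ x : X, s = MulAction.orbit G x} ∨
      ∃ P : Set X, Perfect P ∧ P.Nonempty ∧
        (∀ x ∈ P, ∀ y ∈ P, x ≠ y → x ∉ MulAction.orbit G y) ∧
        Cardinal.continuum ≤ Cardinal.mk (Quotient (MulAction.orbitRel G X)) := by
  obtain ⟨F, hF, hF_mono, hsF⟩ := exists_isClosed_monotone_iff_orbitRel G X
  rcases (orbitRel G X).countable_quotient_or_exists_continuous_pairwise_not_rel hF hF_mono hsF
    with hcount | ⟨f, hf, hpair⟩
  · refine .inl ((countable_range (orbitRel.Quotient.orbit (G := G) (α := X))).mono ?_)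
    rintro _ ⟨x, rfl⟩
    exact ⟨_, orbitRel.Quotient.orbit_mk x⟩
  have hinj : Function.Injective f := fun σ τ h => by_contra fun hne => hpair hne (h ▸ refl _)
  have hinjq : Function.Injective fun σ => (⟦f σ⟧ : Quotient (orbitRel G X)) :=
    fun σ τ h => by_contra fun hne => hpair hne (Quotient.exact h)
  refine .inr ⟨range f, ⟨(isCompact_range hf).isClosed,
    preperfect_range_of_continuous_injective hf hinj⟩, range_nonempty f, ?_, ?_⟩
  · rintro _ ⟨σ, rfl⟩ _ ⟨τ, rfl⟩ hne
    exact hpair fun h => hne (h ▸ rfl)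
  · simpa using Cardinal.lift_mk_le_lift_mk_of_injective hinjq

/-- The topological Vaught conjecture for locally compact Polish groups. -/
theorem stmt_7 {G X : Type*} [Group G] [TopologicalSpace G] [IsTopologicalGroup G]
    [PolishSpace G] [LocallyCompactSpace G] [TopologicalSpace X] [PolishSpace X]
    [MulAction G X] [ContinuousSMul G X] :
    Set.Countable {s : Set X | ∃ x : X, s = MulAction.orbit G x} ∨
      ∃ P : Set X, Perfect P ∧ P.Nonempty ∧
        (∀ x ∈ P, ∀ y ∈ P, x ≠ y → x ∉ MulAction.orbit G y) ∧
        Cardinal.continuum ≤ Cardinal.mk (Quotient (MulAction.orbitRel G X)) :=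
  stmt_7_general
end

section
/- Let G be a Polish group acting continuously on a Polish space X and let x ∈ X. If the orbit [x]_G is a Gδ subset of X, then the orbit map G → [x]_G, g ↦ g·x, is an open map (onto the orbit with its subspace topology). -/
/-!
A `Gδ` set `⋂ n, U n` is Polish, being closed in `∀ n, U n`; so it suffices to consider a Polish
group `G` acting transitively on a Polish space `Y`. A Baire category argument with countably many
translates of a small neighbourhood `V` of `1` gives `y ∈ interior (closure (V • {y}))`: the orbit
maps are nearly open. Completeness of `G` upgrades this to openness. For `z` near `y`, shrink two
open sets `A, B ⊆ V` to points `a, b` while keeping a nonempty open set in which both `A • {y}`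
and `B • {z}` are dense; the limits satisfy `a • y = b • z`, so `z ∈ (V⁻¹ * V) • {y}`.
-/

open Set Filter Topology Metric Pointwise MulAction

theorem IsGδ.polishSpace {X : Type*} [TopologicalSpace X] [PolishSpace X] {s : Set X}
    (hs : IsGδ s) : PolishSpace s := by
  obtain ⟨U, hU, rfl⟩ := hs.eq_iInter_nat
  have : ∀ n, PolishSpace (U n) := fun n => (hU n).polishSpace
  let e : (⋂ n, U n : Set X) → ∀ n, U n := fun z n => ⟨z, mem_iInter.1 z.2 n⟩
  have he : IsEmbedding e :=
    .of_comp (by fun_prop) (by fun_prop : Continuous fun p : ∀ n, U n => (p 0 : X))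
      .subtypeVal
  have hrange : range e = ⋂ n, {p | (p n : X) = p 0} := by
    refine Subset.antisymm (range_subset_iff.2 fun z => mem_iInter.2 fun n => rfl)
      fun p hp => ?_
    replace hp : ∀ n, (p n : X) = p 0 := fun n => mem_iInter.1 hp n
    exact ⟨⟨p 0, mem_iInter.2 fun n => hp n ▸ (p n).2⟩, funext fun n => Subtype.ext (hp n).symm⟩
  refine (IsClosedEmbedding.mk he ?_).polishSpace
  rw [hrange]
  exact isClosed_iInter fun n => isClosed_eq (by fun_prop) (by fun_prop)

theorem Antitone.neBot_iInf_principal {ι α : Type*} [Preorder ι] [IsDirected ι (· ≤ ·)]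
    [Nonempty ι] {A : ι → Set α} (hA : Antitone A) (hne : ∀ i, (A i).Nonempty) :
    (⨅ i, 𝓟 (A i)).NeBot :=
  (hasBasis_iInf_principal hA.directed_ge).neBot_iff.2 fun _ => hne _

section NearlyOpen

variable {X Y : Type*} [TopologicalSpace Y]

def IsNearlyOpenMap [TopologicalSpace X] (f : X → Y) : Prop :=
  ∀ x, ∀ s ∈ 𝓝 x, f x ∈ interior (closure (f '' s))

variable [PseudoMetricSpace X]

theorem IsNearlyOpenMap.exists_small_subset {f : X → Y} (hf : IsNearlyOpenMap f) {A : Set X}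
    (hA : IsOpen A) {O : Set Y} (hO : IsOpen O) (hOne : O.Nonempty)
    (hOA : O ⊆ closure (f '' A)) {ε : ℝ} (hε : 0 < ε) :
    ∃ A' ⊆ A, IsOpen A' ∧ (∃ c, A' ⊆ ball c ε) ∧
      (O ∩ interior (closure (f '' A'))).Nonempty := by
  obtain ⟨z, hzO⟩ := hOne
  obtain ⟨_, hO, a, ha, rfl⟩ := mem_closure_iff.1 (hOA hzO) O hO hzO
  exact ⟨A ∩ ball a ε, inter_subset_left, hA.inter isOpen_ball, ⟨a, inter_subset_right⟩,
    f a, hO, hf a _ (inter_mem (hA.mem_nhds ha) (ball_mem_nhds a hε))⟩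

theorem exists_mem_closure_iInf_principal_le_nhds [CompleteSpace X] {A : ℕ → Set X}
    (hA : Antitone A) (hne : ∀ n, (A n).Nonempty) (hsmall : ∀ ε > 0, ∃ n c, A n ⊆ ball c ε) :
    ∃ a ∈ closure (A 0), ⨅ n, 𝓟 (A n) ≤ 𝓝 a := by
  have := hA.neBot_iInf_principal hne
  have hcauchy : Cauchy (⨅ n, 𝓟 (A n)) := by
    refine Metric.cauchy_iff.2 ⟨this, fun ε hε => ?_⟩
    obtain ⟨n, c, hc⟩ := hsmall (ε / 2) (half_pos hε)
    refine ⟨A n, mem_iInf_of_mem n (mem_principal_self _), fun x hx y hy => ?_⟩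
    have hx := mem_ball.1 (hc hx)
    have hy := mem_ball'.1 (hc hy)
    linarith [dist_triangle x c y]
  obtain ⟨a, ha⟩ := CompleteSpace.complete hcauchy
  exact ⟨a, mem_closure_of_tendsto (f := id) (b := ⨅ n, 𝓟 (A n)) ha
    (mem_iInf_of_mem 0 (mem_principal_self _)), ha⟩

theorem iInf_principal_le_nhds_of_subset_closure [RegularSpace Y] {f : X → Y} {a : X}
    (hf : ContinuousAt f a) {A : ℕ → Set X} (hA : Antitone A) (ha : ⨅ n, 𝓟 (A n) ≤ 𝓝 a)
    {O : ℕ → Set Y} (hO : ∀ n, O n ⊆ closure (f '' A n)) : ⨅ n, 𝓟 (O n) ≤ 𝓝 (f a) := by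
  rw [← lift'_nhds_closure]
  refine le_trans ?_ (lift'_mono (hf.mono_left ha) le_rfl)
  refine le_lift'.2 fun s hs => ?_
  obtain ⟨n, -, hn⟩ := (hasBasis_iInf_principal hA.directed_ge).mem_iff.1 (mem_map.1 hs)
  exact mem_iInf_of_mem n <| mem_principal.2 <|
    (hO n).trans (closure_mono (image_subset_iff.2 hn))

structure DenseOverlap (f g : X → Y) where
  A : Set X
  B : Set X
  O : Set Y
  isOpen_A : IsOpen A
  isOpen_B : IsOpen B
  isOpen_O : IsOpen O
  nonempty_O : O.Nonempty
  subset_closure_A : O ⊆ closure (f '' A)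
  subset_closure_B : O ⊆ closure (g '' B)

theorem DenseOverlap.nonempty_A {f g : X → Y} (s : DenseOverlap f g) : s.A.Nonempty :=
  image_nonempty.1 (closure_nonempty_iff.1 (s.nonempty_O.mono s.subset_closure_A))

theorem DenseOverlap.nonempty_B {f g : X → Y} (s : DenseOverlap f g) : s.B.Nonempty :=
  image_nonempty.1 (closure_nonempty_iff.1 (s.nonempty_O.mono s.subset_closure_B))

theorem DenseOverlap.exists_refine {f g : X → Y} (hf : IsNearlyOpenMap f)
    (hg : IsNearlyOpenMap g) (s : DenseOverlap f g) {ε : ℝ} (hε : 0 < ε) :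
    ∃ t : DenseOverlap f g, (t.A ⊆ s.A ∧ t.B ⊆ s.B ∧ t.O ⊆ s.O) ∧
      (∃ c, t.A ⊆ ball c ε) ∧ ∃ c, t.B ⊆ ball c ε := by
  obtain ⟨A, hAs, hAo, hAε, hA⟩ :=
    hf.exists_small_subset s.isOpen_A s.isOpen_O s.nonempty_O s.subset_closure_A hε
  set O' := s.O ∩ interior (closure (f '' A))
  have hO'o : IsOpen O' := s.isOpen_O.inter isOpen_interior
  obtain ⟨B, hBs, hBo, hBε, hB⟩ := hg.exists_small_subset s.isOpen_B hO'o hA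
    (inter_subset_left.trans s.subset_closure_B) hε
  refine ⟨⟨A, B, O' ∩ interior (closure (g '' B)), hAo, hBo, hO'o.inter isOpen_interior, hB,
    fun y hy => interior_subset hy.1.2, fun y hy => interior_subset hy.2⟩,
    ⟨hAs, hBs, fun y hy => hy.1.1⟩, hAε, hBε⟩

theorem DenseOverlap.exists_antitone_seq {f g : X → Y} (hf : IsNearlyOpenMap f)
    (hg : IsNearlyOpenMap g) (s : DenseOverlap f g) :
    ∃ t : ℕ → DenseOverlap f g, t 0 = s ∧ Antitone (fun n => (t n).A) ∧
      Antitone (fun n => (t n).B) ∧ Antitone (fun n => (t n).O) ∧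
      (∀ ε > 0, ∃ n c, (t n).A ⊆ ball c ε) ∧ ∀ ε > 0, ∃ n c, (t n).B ⊆ ball c ε := by
  choose! next hnext_le hnext_A hnext_B using fun (n : ℕ) (t : DenseOverlap f g) =>
    t.exists_refine hf hg (Nat.one_div_pos_of_nat (n := n))
  let t : ℕ → DenseOverlap f g := fun n => Nat.rec s next n
  refine ⟨t, rfl, antitone_nat_of_succ_le fun n => (hnext_le n _).1,
    antitone_nat_of_succ_le fun n => (hnext_le n _).2.1,
    antitone_nat_of_succ_le fun n => (hnext_le n _).2.2, fun ε hε => ?_, fun ε hε => ?_⟩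
  all_goals obtain ⟨n, hn⟩ := exists_nat_one_div_lt hε
  · obtain ⟨c, hc⟩ := hnext_A n (t n)
    exact ⟨n + 1, c, hc.trans (ball_subset_ball hn.le)⟩
  · obtain ⟨c, hc⟩ := hnext_B n (t n)
    exact ⟨n + 1, c, hc.trans (ball_subset_ball hn.le)⟩

theorem IsNearlyOpenMap.exists_eq_of_denseOverlap [CompleteSpace X] [T3Space Y] {f g : X → Y}
    (hf : IsNearlyOpenMap f) (hg : IsNearlyOpenMap g) (hfc : Continuous f) (hgc : Continuous g)
    (s : DenseOverlap f g) : ∃ a ∈ closure s.A, ∃ b ∈ closure s.B, f a = g b := by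
  obtain ⟨t, rfl, hA, hB, hO, hsmallA, hsmallB⟩ := s.exists_antitone_seq hf hg
  obtain ⟨a, ha₀, ha⟩ :=
    exists_mem_closure_iInf_principal_le_nhds hA (fun n => (t n).nonempty_A) hsmallA
  obtain ⟨b, hb₀, hb⟩ :=
    exists_mem_closure_iInf_principal_le_nhds hB (fun n => (t n).nonempty_B) hsmallB
  have := hO.neBot_iInf_principal fun n => (t n).nonempty_O
  have hfa := iInf_principal_le_nhds_of_subset_closure hfc.continuousAt hA ha
    fun n => (t n).subset_closure_A
  have hgb := iInf_principal_le_nhds_of_subset_closure hgc.continuousAt hB hb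
    fun n => (t n).subset_closure_B
  exact ⟨a, ha₀, b, hb₀, tendsto_nhds_unique (f := id) (l := ⨅ n, 𝓟 (t n).O) hfa hgb⟩

end NearlyOpen

section Action

variable {G Y : Type*} [Group G] [TopologicalSpace G] [IsTopologicalGroup G] [TopologicalSpace Y]
  [MulAction G Y]

theorem mem_interior_closure_smul_singleton [IsPretransitive G Y] [LindelofSpace G]
    [BaireSpace Y] [ContinuousConstSMul G Y] {U : Set G} (hU : U ∈ 𝓝 1) (y : Y) :
    y ∈ interior (closure (U • {y})) := by
  obtain ⟨V, V_mem, -, V_symm, VU⟩ := exists_closed_nhds_one_inv_eq_mul_subset hU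
  obtain ⟨s, s_count, hs⟩ : ∃ s : Set G, s.Countable ∧ ⋃ g ∈ s, g • V = univ :=
    countable_cover_nhds fun g => by simpa using smul_mem_nhds_smul g V_mem
  obtain ⟨⟨g, _⟩, hg⟩ :
      ∃ g : s, (interior (closure ((g : G) • V • ({y} : Set Y)))).Nonempty := by
    have : Nonempty Y := ⟨y⟩
    have : Countable s := s_count.to_subtype
    refine nonempty_interior_of_iUnion_of_closed (fun _ => isClosed_closure) ?_
    refine eq_univ_iff_forall.2 fun z => ?_
    obtain ⟨h, rfl⟩ := exists_smul_eq G y z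
    obtain ⟨g, gs, hg⟩ : ∃ g ∈ s, h ∈ g • V := exists_set_mem_of_union_eq_top s _ hs h
    refine mem_iUnion.2 ⟨⟨g, gs⟩, subset_closure ?_⟩
    rw [← smul_assoc, smul_singleton]
    exact mem_image_of_mem _ hg
  rw [closure_smul, interior_smul, smul_set_nonempty] at hg
  obtain ⟨z, hz⟩ := hg
  obtain ⟨_, hvy, hmem⟩ := mem_closure_iff.1 (interior_subset hz) _ isOpen_interior hz
  rw [smul_singleton] at hmem
  obtain ⟨v, hv, rfl⟩ := hmem
  have : y ∈ interior (closure ((v⁻¹ • V) • {y})) := by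
    rwa [smul_assoc, closure_smul, interior_smul, mem_inv_smul_set_iff]
  refine interior_mono (closure_mono (smul_subset_smul_right ?_)) this
  refine (smul_set_subset_smul (inv_mem_inv.2 hv)).trans ?_
  rw [V_symm]
  exact VU

theorem isNearlyOpenMap_smul [IsPretransitive G Y] [LindelofSpace G] [BaireSpace Y]
    [ContinuousConstSMul G Y] (y : Y) : IsNearlyOpenMap (· • y : G → Y) := by
  intro g s hs
  have hs' : g⁻¹ • s ∈ 𝓝 1 := by simpa using smul_mem_nhds_smul g⁻¹ hs
  rw [← smul_singleton, ← mem_inv_smul_set_iff, ← interior_smul, ← closure_smul, ← smul_assoc]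
  exact mem_interior_closure_smul_singleton hs' y

theorem smul_singleton_mem_nhds_of_isNearlyOpenMap
    [TopologicalSpace.IsCompletelyMetrizableSpace G] [T3Space Y] [ContinuousSMul G Y]
    (h : ∀ y : Y, IsNearlyOpenMap (· • y : G → Y)) {U : Set G} (hU : U ∈ 𝓝 1) (y : Y) :
    U • {y} ∈ 𝓝 y := by
  let := TopologicalSpace.upgradeIsCompletelyMetrizable G
  obtain ⟨V, V_mem, V_closed, V_symm, VU⟩ := exists_closed_nhds_one_inv_eq_mul_subset hU
  have hcont (z : Y) : Continuous (· • z : G → Y) := continuous_id.smul continuous_const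
  have hmem (z : Y) : z ∈ interior (closure ((· • z) '' interior V)) := by
    simpa using h z 1 _ (interior_mem_nhds.2 V_mem)
  refine mem_of_superset (isOpen_interior.mem_nhds (hmem y)) fun z hz => ?_
  obtain ⟨a, ha, b, hb, hab⟩ := (h y).exists_eq_of_denseOverlap (h z) (hcont y) (hcont z)
    ⟨interior V, interior V, _ ∩ _, isOpen_interior, isOpen_interior,
      isOpen_interior.inter isOpen_interior, ⟨z, hz, hmem z⟩,
      fun _ hx => interior_subset hx.1, fun _ hx => interior_subset hx.2⟩
  have hV : closure (interior V) ⊆ V := closure_minimal interior_subset V_closed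
  rw [smul_singleton]
  refine ⟨b⁻¹ * a, VU (mul_mem_mul (V_symm ▸ inv_mem_inv.2 (hV hb)) (hV ha)), ?_⟩
  simp only [mul_smul, hab, inv_smul_smul]

theorem isOpenMap_smul_of_isNearlyOpenMap [TopologicalSpace.IsCompletelyMetrizableSpace G]
    [T3Space Y] [ContinuousSMul G Y] (h : ∀ y : Y, IsNearlyOpenMap (· • y : G → Y)) (y : Y) :
    IsOpenMap (· • y : G → Y) := by
  simp_rw [isOpenMap_iff_nhds_le, Filter.le_map_iff]
  intro g U hU
  have : (· • y) = (· • (g • y)) ∘ (· * g⁻¹) := by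
    ext g
    simp [smul_smul]
  rw [this, image_comp, ← smul_singleton]
  apply smul_singleton_mem_nhds_of_isNearlyOpenMap h
  simpa using isOpenMap_mul_right g⁻¹ |>.image_mem_nhds hU

theorem isOpenMap_smul_of_polishSpace [PolishSpace G] [BaireSpace Y] [T3Space Y]
    [ContinuousSMul G Y] [IsPretransitive G Y] (y : Y) : IsOpenMap (· • y : G → Y) :=
  isOpenMap_smul_of_isNearlyOpenMap isNearlyOpenMap_smul y

end Action

instance MulAction.orbit.continuousSMul {M X : Type*} [Monoid M] [TopologicalSpace M]
    [TopologicalSpace X] [MulAction M X] [ContinuousSMul M X] (x : X) :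
    ContinuousSMul M (orbit M x) :=
  ⟨(continuous_fst.smul (continuous_subtype_val.comp continuous_snd)).subtype_mk _⟩

/-- Effros: if the orbit of `x` is `Gδ`, then the orbit map is open onto the orbit. -/
theorem stmt_8 {G X : Type*} [Group G] [TopologicalSpace G] [IsTopologicalGroup G]
    [PolishSpace G] [TopologicalSpace X] [PolishSpace X]
    [MulAction G X] [ContinuousSMul G X] (x : X)
    (hGδ : IsGδ (MulAction.orbit G x : Set X)) :
    IsOpenMap fun g : G =>
      (⟨g • x, MulAction.mem_orbit x g⟩ : MulAction.orbit G x) := by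
  have := hGδ.polishSpace
  exact isOpenMap_smul_of_polishSpace (⟨x, mem_orbit_self x⟩ : orbit G x)
end

section
/- Let G be a Polish group acting continuously on a Polish space X, and suppose the orbit map g ↦ g·x is open onto the orbit [x]_G. Then for every open neighborhood V of the identity in G there is an open set U ⊆ X containing x such that: for all x' ∈ U ∩ [x]_G and all open U' ⊆ X, if [x]_G ∩ U' ∩ U ≠ ∅ then there exists g ∈ V with g·x' ∈ U'. -/
/-!
If the orbit map `g ↦ g • x` is open onto the orbit, then for `W` a neighbourhood of `1` with
`W / W ⊆ V`, the set `W • x` is the trace on the orbit of an open set `U ∋ x`. Two points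
`w • x` and `w' • x` of `U` on the orbit are then moved into each other by `w' / w ∈ V`.
-/

open MulAction

theorem MulAction.exists_isOpen_inter_orbit_eq_image {G X : Type*} [Group G]
    [TopologicalSpace G] [TopologicalSpace X] [MulAction G X] {x : X}
    (hopen : IsOpenMap fun g : G => (⟨g • x, mem_orbit x g⟩ : orbit G x))
    {W : Set G} (hW : IsOpen W) :
    ∃ U : Set X, IsOpen U ∧ U ∩ orbit G x = (· • x) '' W := by
  obtain ⟨U, hU, hpre⟩ := isOpen_induced_iff.mp (hopen W hW)
  refine ⟨U, hU, Set.ext fun y => ⟨fun ⟨hyU, hy⟩ => ?_, ?_⟩⟩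
  · have : (⟨y, hy⟩ : orbit G x) ∈ Subtype.val ⁻¹' U := hyU
    obtain ⟨g, hg, hgy⟩ := hpre ▸ this
    exact ⟨g, hg, congrArg Subtype.val hgy⟩
  · rintro ⟨g, hg, rfl⟩
    have : (⟨g • x, mem_orbit x g⟩ : orbit G x) ∈ Subtype.val ⁻¹' U := hpre ▸ ⟨g, hg, rfl⟩
    exact ⟨this, mem_orbit x g⟩

theorem stmt_9_general {G X : Type*} [Group G] [TopologicalSpace G] [IsTopologicalGroup G]
    [TopologicalSpace X]
    [MulAction G X] (x : X)
    (hopen : IsOpenMap fun g : G =>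
      (⟨g • x, MulAction.mem_orbit x g⟩ : MulAction.orbit G x)) :
    ∀ V : Set G, IsOpen V → (1 : G) ∈ V →
      ∃ U : Set X, IsOpen U ∧ x ∈ U ∧
        ∀ x' ∈ U ∩ MulAction.orbit G x, ∀ U' : Set X, IsOpen U' →
          (MulAction.orbit G x ∩ U' ∩ U).Nonempty → ∃ g ∈ V, g • x' ∈ U' := by
  intro V hV h1V
  obtain ⟨W, hW, hWV⟩ := exists_nhds_split_inv (hV.mem_nhds h1V)
  obtain ⟨U, hU, hUW⟩ :=
    exists_isOpen_inter_orbit_eq_image hopen (isOpen_interior (s := W))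
  have hxU : x ∈ U ∩ orbit G x := hUW ▸ ⟨1, mem_interior_iff_mem_nhds.mpr hW, one_smul G x⟩
  refine ⟨U, hU, hxU.1, fun x' hx' U' _ ⟨y, ⟨hy, hyU'⟩, hyU⟩ => ?_⟩
  obtain ⟨w, hw, rfl⟩ := (hUW ▸ hx' : x' ∈ (· • x) '' interior W)
  obtain ⟨w', hw', rfl⟩ := (hUW ▸ ⟨hyU, hy⟩ : y ∈ (· • x) '' interior W)
  refine ⟨w' / w, hWV w' (interior_subset hw') w (interior_subset hw), ?_⟩
  rwa [smul_smul, div_mul_cancel]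

theorem stmt_9 {G X : Type*} [Group G] [TopologicalSpace G] [IsTopologicalGroup G]
    [PolishSpace G] [TopologicalSpace X] [PolishSpace X]
    [MulAction G X] [ContinuousSMul G X] (x : X)
    (hopen : IsOpenMap fun g : G =>
      (⟨g • x, MulAction.mem_orbit x g⟩ : MulAction.orbit G x)) :
    ∀ V : Set G, IsOpen V → (1 : G) ∈ V →
      ∃ U : Set X, IsOpen U ∧ x ∈ U ∧
        ∀ x' ∈ U ∩ MulAction.orbit G x, ∀ U' : Set X, IsOpen U' →
          (MulAction.orbit G x ∩ U' ∩ U).Nonempty → ∃ g ∈ V, g • x' ∈ U' :=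
  stmt_9_general x hopen
end

section
/- Let G be a Polish group acting continuously on a Polish space X, and suppose the orbit map of x is open onto [x]_G. Then the orbit [x]_G is a Gδ subset of its closure; consequently if [x]_G is dense in X then [x]_G is comeager in X. -/
/-! For open `V ⊆ G` the set `p '' V` is relatively open in `S = range p`, so it is the trace on
`S` of the open set `E V = (closure (S \ p '' V))ᶜ`. Fix a countable basis `b` of `G`. Every point
of `S` satisfies the countably many conditions "if `y ∈ E V` with `V ∈ insert univ b`, then
`y ∈ E V'` for some `V' ∈ b`, `V' ⊆ V`, of diameter at most `2⁻ⁿ`", and each of them defines a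
set of the form closed ∪ open, which is `Gδ` in a metrizable space. Conversely, a point `y` of
`closure S` satisfying all of them yields a nested sequence `Vₙ` of shrinking diameter with
`y ∈ closure (p '' Vₙ)`; by completeness of `G`, points `gₙ ∈ Vₙ` with `p gₙ → y` converge to
some `g`, and `p g = y`. -/

open Set Filter Topology TopologicalSpace

section OpenExtension

variable {X : Type*} [TopologicalSpace X] {S A : Set X}

/-- The largest open set whose trace on `S` is contained in `A`. -/
def openExtension (S A : Set X) : Set X := (closure (S \ A))ᶜ

theorem isOpen_openExtension (S A : Set X) : IsOpen (openExtension S A) :=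
  isClosed_closure.isOpen_compl

theorem openExtension_inter_subset : openExtension S A ∩ S ⊆ A := fun _ ⟨hy, hyS⟩ =>
  of_not_not fun hyA => hy (subset_closure ⟨hyS, hyA⟩)

theorem openExtension_inter_closure_subset :
    openExtension S A ∩ closure S ⊆ closure A :=
  ((isOpen_openExtension S A).inter_closure).trans (closure_mono openExtension_inter_subset)

theorem subset_openExtension {W : Set X} (hW : IsOpen W) (hWA : W ∩ S ⊆ A) :
    W ⊆ openExtension S A := by
  have : Disjoint W (S \ A) := disjoint_left.2 fun y hyW hy => hy.2 (hWA ⟨hyW, hy.1⟩)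
  exact (this.closure_right hW).subset_compl_right

theorem openExtension_univ : openExtension S S = univ := by
  simp [openExtension]

end OpenExtension

section Refinement

variable {G X : Type*} [MetricSpace G] [TopologicalSpace X] {p : G → X} {b : Set (Set G)}

theorem image_subset_openExtension (hp : IsOpenMap (rangeFactorization p)) {V : Set G}
    (hV : IsOpen V) : p '' V ⊆ openExtension (range p) (p '' V) := by
  obtain ⟨W, hW, hWV⟩ := isOpen_induced_iff.1 (hp V hV)
  refine Subset.trans ?_ (subset_openExtension hW ?_)
  · rintro _ ⟨g, hg, rfl⟩
    exact show rangeFactorization p g ∈ Subtype.val ⁻¹' W from hWV ▸ mem_image_of_mem _ hg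
  · rintro y ⟨hyW, g, rfl⟩
    have : rangeFactorization p g ∈ Subtype.val ⁻¹' W := hyW
    rw [hWV] at this
    obtain ⟨g', hg', hgg'⟩ := this
    exact ⟨g', hg', congrArg Subtype.val hgg'⟩

def smallSubsets (b : Set (Set G)) (V : Set G) (ε : ℝ) : Set (Set G) :=
  {V' ∈ b | V' ⊆ V ∧ ∀ g ∈ V', ∀ h ∈ V', dist g h ≤ ε}

def refinableSet (p : G → X) (b : Set (Set G)) : Set X :=
  ⋂ n : ℕ, ⋂ V ∈ insert univ b, (openExtension (range p) (p '' V))ᶜ ∪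
    ⋃ V' ∈ smallSubsets b V ((1 / 2 : ℝ) ^ n), openExtension (range p) (p '' V')

theorem mem_refinableSet {y : X} :
    y ∈ refinableSet p b ↔ ∀ (n : ℕ), ∀ V ∈ insert univ b, y ∈ openExtension (range p) (p '' V) →
      ∃ V' ∈ smallSubsets b V ((1 / 2 : ℝ) ^ n), y ∈ openExtension (range p) (p '' V') := by
  simp only [refinableSet, mem_iInter, mem_union, mem_compl_iff, mem_iUnion, exists_prop,
    ← imp_iff_not_or]

theorem isGδ_refinableSet [PerfectlyNormalSpace X] (hb : b.Countable) :
    IsGδ (refinableSet p b) :=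
  .iInter fun _ => .biInter (hb.insert univ) fun _ _ =>
    (isOpen_openExtension _ _).isClosed_compl.isGδ.union
      (isOpen_biUnion fun _ _ => isOpen_openExtension _ _).isGδ

theorem range_subset_refinableSet (hp : IsOpenMap (rangeFactorization p))
    (hb : IsTopologicalBasis b) : range p ⊆ refinableSet p b := by
  rintro _ ⟨g, rfl⟩
  refine mem_refinableSet.2 fun n V hV hgV => ?_
  obtain ⟨g', hg'V, hg'g⟩ := openExtension_inter_subset ⟨hgV, mem_range_self g⟩
  have hε : (0 : ℝ) < (1 / 2) ^ n / 2 := by positivity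
  obtain ⟨V', hV'b, hgV', hV'⟩ := hb.exists_subset_of_mem_open
    (show g' ∈ V ∩ Metric.ball g' ((1 / 2) ^ n / 2) from ⟨hg'V, Metric.mem_ball_self hε⟩)
    ((hV.elim (· ▸ isOpen_univ) hb.isOpen).inter Metric.isOpen_ball)
  refine ⟨V', ⟨hV'b, fun _ hh => (hV' hh).1, fun h₁ hh₁ h₂ hh₂ => ?_⟩, ?_⟩
  · have d₁ := (hV' hh₁).2; have d₂ := (hV' hh₂).2
    rw [Metric.mem_ball] at d₁ d₂
    linarith [dist_triangle_right h₁ h₂ g']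
  · rw [← hg'g]
    exact image_subset_openExtension hp (hb.isOpen hV'b) (mem_image_of_mem p hgV')

theorem mem_range_of_mem_closure_image_of_antitone [CompleteSpace G] [FirstCountableTopology X]
    [T2Space X] (hp : Continuous p) {V : ℕ → Set G} (hV : Antitone V) {u : ℕ → ℝ}
    (hu : Tendsto u atTop (𝓝 0)) (hsmall : ∀ n, ∀ g ∈ V n, ∀ h ∈ V n, dist g h ≤ u n) {y : X}
    (hy : ∀ n, y ∈ closure (p '' V n)) : y ∈ range p := by
  obtain ⟨U, hU⟩ := (𝓝 y).exists_antitone_basis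
  have hmeet : ∀ n, ∃ g ∈ V n, p g ∈ U n := fun n => by
    obtain ⟨_, hyU, g, hg, rfl⟩ := mem_closure_iff_nhds.1 (hy n) (U n) (hU.mem n)
    exact ⟨g, hg, hyU⟩
  choose g hgV hgU using hmeet
  have hcauchy : CauchySeq g := cauchySeq_of_le_tendsto_0 u
    (fun m k n hm hk => hsmall n _ (hV hm (hgV m)) _ (hV hk (hgV k))) hu
  obtain ⟨g₀, hg₀⟩ := cauchySeq_tendsto_of_complete hcauchy
  exact ⟨g₀, tendsto_nhds_unique ((hp.tendsto g₀).comp hg₀) (hU.tendsto hgU)⟩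

theorem exists_antitone_of_mem_refinableSet {y : X} (hy : y ∈ refinableSet p b) :
    ∃ V : ℕ → Set G, Antitone V ∧ (∀ n, ∀ g ∈ V n, ∀ h ∈ V n, dist g h ≤ (1 / 2 : ℝ) ^ n) ∧
      ∀ n, y ∈ openExtension (range p) (p '' V n) := by
  rw [mem_refinableSet] at hy
  have hstep : ∀ (n : ℕ) (V : Set G), ∃ V', V ∈ insert univ b →
      y ∈ openExtension (range p) (p '' V) →
        V' ∈ smallSubsets b V ((1 / 2 : ℝ) ^ n) ∧ y ∈ openExtension (range p) (p '' V') := by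
    intro n V
    by_cases h : V ∈ insert univ b ∧ y ∈ openExtension (range p) (p '' V)
    · obtain ⟨V', hV', hyV'⟩ := hy n V h.1 h.2
      exact ⟨V', fun _ _ => ⟨hV', hyV'⟩⟩
    · exact ⟨V, fun h₁ h₂ => (h ⟨h₁, h₂⟩).elim⟩
  choose next hnext using hstep
  let W : ℕ → Set G := fun n => Nat.rec univ next n
  have hW : ∀ n, W n ∈ insert univ b ∧ y ∈ openExtension (range p) (p '' W n) := by
    intro n
    induction n with
    | zero => exact ⟨mem_insert _ _, by simp [W, image_univ, openExtension_univ]⟩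
    | succ n ih =>
      obtain ⟨⟨hWb, -⟩, hyW⟩ := hnext n (W n) ih.1 ih.2
      exact ⟨mem_insert_of_mem _ hWb, hyW⟩
  have hsmall : ∀ n, W (n + 1) ∈ smallSubsets b (W n) ((1 / 2 : ℝ) ^ n) :=
    fun n => (hnext n (W n) (hW n).1 (hW n).2).1
  exact ⟨fun n => W (n + 1), antitone_nat_of_succ_le fun n => (hsmall (n + 1)).2.1,
    fun n => (hsmall n).2.2, fun n => (hW (n + 1)).2⟩

theorem mem_range_of_mem_closure_of_mem_refinableSet [CompleteSpace G]
    [FirstCountableTopology X] [T2Space X] (hp : Continuous p) {y : X}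
    (hyS : y ∈ closure (range p)) (hy : y ∈ refinableSet p b) : y ∈ range p := by
  obtain ⟨V, hV, hsmall, hyV⟩ := exists_antitone_of_mem_refinableSet hy
  exact mem_range_of_mem_closure_image_of_antitone hp hV
    (tendsto_pow_atTop_nhds_zero_of_lt_one (by norm_num) (by norm_num)) hsmall
    fun n => openExtension_inter_closure_subset ⟨hyV n, hyS⟩

end Refinement

theorem exists_isGδ_closure_inter_eq_range {G X : Type*} [TopologicalSpace G] [PolishSpace G]
    [TopologicalSpace X] [MetrizableSpace X] {p : G → X} (hp : Continuous p)
    (hopen : IsOpenMap (rangeFactorization p)) :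
    ∃ A : Set X, IsGδ A ∧ closure (range p) ∩ A = range p := by
  let := upgradeIsCompletelyMetrizable G
  obtain ⟨b, hbc, -, hb⟩ := exists_countable_basis G
  exact ⟨refinableSet p b, isGδ_refinableSet hbc,
    (subset_inter subset_closure (range_subset_refinableSet hopen hb)).antisymm'
      fun _ hy => mem_range_of_mem_closure_of_mem_refinableSet hp hy.1 hy.2⟩

theorem stmt_10_general {G X : Type*} [Group G] [TopologicalSpace G]
    [PolishSpace G] [TopologicalSpace X] [PolishSpace X]
    [MulAction G X] [ContinuousSMul G X] (x : X)
    (hopen : IsOpenMap fun g : G =>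
      (⟨g • x, MulAction.mem_orbit x g⟩ : MulAction.orbit G x)) :
    IsGδ {y : closure (MulAction.orbit G x) | (y : X) ∈ MulAction.orbit G x} ∧
      (Dense (MulAction.orbit G x) → MulAction.orbit G x ∈ residual X) := by
  obtain ⟨A, hA, hAorbit⟩ :=
    exists_isGδ_closure_inter_eq_range (continuous_id.smul continuous_const) hopen
  change closure (MulAction.orbit G x) ∩ A = MulAction.orbit G x at hAorbit
  refine ⟨?_, fun hdense => ?_⟩
  · convert hA.preimage continuous_subtype_val using 1
    ext y
    exact ⟨fun hy => (hAorbit.ge hy).2, fun hy => hAorbit.le ⟨y.2, hy⟩⟩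
  · rw [hdense.closure_eq, univ_inter] at hAorbit
    exact residual_of_dense_Gδ (hAorbit ▸ hA) hdense

theorem stmt_10 {G X : Type*} [Group G] [TopologicalSpace G] [IsTopologicalGroup G]
    [PolishSpace G] [TopologicalSpace X] [PolishSpace X]
    [MulAction G X] [ContinuousSMul G X] (x : X)
    (hopen : IsOpenMap fun g : G =>
      (⟨g • x, MulAction.mem_orbit x g⟩ : MulAction.orbit G x)) :
    IsGδ {y : closure (MulAction.orbit G x) | (y : X) ∈ MulAction.orbit G x} ∧
      (Dense (MulAction.orbit G x) → MulAction.orbit G x ∈ residual X) :=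
  stmt_10_general x hopen
end

section
/- If G is a Polish group acting continuously on a Polish space X and some orbit [x]_G is non-meager in X, then the orbit map g ↦ g·x is open onto [x]_G. -/
/-!
Baire category turns the non-meagre orbit into the "almost openness" `closure (V • {y}) ∈ 𝓝 y`
for every `y` in the orbit and every neighbourhood `V` of `1`: countably many translates of
`V • {y}` cover the orbit, so `V • {y}` is not nowhere dense.
Almost openness is upgraded to openness as in the Banach open mapping theorem. For `z` in the
orbit close to `x`, one builds, with a complete metric on `G`, Cauchy sequences `uₙ, pₙ` such that
`uₙ⁻¹ • pₙ • z` lies ever closer to `x`; the limits `u, p` stay near `1` and satisfy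
`u • x = p • z`.
-/

open MulAction Set Filter Topology Pointwise

theorem exists_seq_of_forall_exists_succ {α : Type*} {P : ℕ → α → Prop}
    {R : ℕ → α → α → Prop} {a : α} (h₀ : P 0 a)
    (hstep : ∀ n a, P n a → ∃ b, P (n + 1) b ∧ R n a b) :
    ∃ f : ℕ → α, f 0 = a ∧ ∀ n, P n (f n) ∧ R n (f n) (f (n + 1)) := by
  have : ∀ n a, ∃ b, P n a → P (n + 1) b ∧ R n a b := fun n a => by
    by_cases h : P n a
    · obtain ⟨b, hb⟩ := hstep n a h
      exact ⟨b, fun _ => hb⟩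
    · exact ⟨a, fun h' => absurd h' h⟩
  choose next hnext using this
  let f : ℕ → α := fun n => Nat.rec a next n
  have hP : ∀ n, P n (f n) := fun n => by
    induction n with
    | zero => exact h₀
    | succ n ih => exact (hnext n _ ih).1
  exact ⟨f, rfl, fun n => ⟨hP n, (hnext n _ (hP n)).2⟩⟩

theorem IsMeagre.smul {G X : Type*} [Group G] [TopologicalSpace X] [MulAction G X]
    [ContinuousConstSMul G X] {s : Set X} (hs : IsMeagre s) (g : G) : IsMeagre (g • s) :=
  (Homeomorph.smul g).isInducing.isMeagre_image hs

section TopologicalGroup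

variable {G X : Type*} [Group G] [TopologicalSpace G] [IsTopologicalGroup G]
  [TopologicalSpace X] [MulAction G X]

theorem exists_mem_nhds_one_inv_mul_subset {U : Set G} (hU : U ∈ 𝓝 (1 : G)) :
    ∃ W ∈ 𝓝 (1 : G), W⁻¹ * W ⊆ U := by
  obtain ⟨W, hW, -, hWinv, hWW⟩ := exists_closed_nhds_one_inv_eq_mul_subset hU
  exact ⟨W, hW, by rwa [hWinv]⟩

theorem Dense.exists_mem_smul_of_mem_nhds_one {D : Set G} (hD : Dense D) {W : Set G}
    (hW : W ∈ 𝓝 (1 : G)) (g : G) : ∃ d ∈ D, g ∈ d • W := by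
  have : g • W⁻¹ ∈ 𝓝 g := by simpa using smul_mem_nhds_smul g (inv_mem_nhds_one G hW)
  obtain ⟨d, hd, hdg⟩ := hD.inter_nhds_nonempty this
  refine ⟨d, hd, ?_⟩
  rw [mem_smul_set_iff_inv_smul_mem] at hdg ⊢
  simpa using hdg

theorem closure_smul_singleton_mem_nhds_of_not_isMeagre_orbit [TopologicalSpace.SeparableSpace G]
    [ContinuousSMul G X] {x y : X} (hnm : ¬ IsMeagre (orbit G x : Set X))
    (hy : y ∈ orbit G x) {V : Set G} (hV : V ∈ 𝓝 (1 : G)) :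
    closure (V • ({y} : Set X)) ∈ 𝓝 y := by
  obtain ⟨W, hW, hWV⟩ := exists_mem_nhds_one_inv_mul_subset hV
  obtain ⟨D, hDc, hD⟩ := TopologicalSpace.exists_countable_dense G
  have hcover : (orbit G y : Set X) ⊆ ⋃ d ∈ D, d • (W • {y}) := by
    rintro - ⟨g, rfl⟩
    obtain ⟨d, hd, w, hw, rfl⟩ := hD.exists_mem_smul_of_mem_nhds_one hW g
    exact mem_biUnion hd ⟨w • y, smul_mem_smul hw rfl, (mul_smul d w y).symm⟩
  have hWy : ¬ IsMeagre (W • ({y} : Set X)) := fun h =>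
    hnm (orbit_eq_iff.2 hy ▸ (isMeagre_biUnion hDc fun d _ => h.smul d).mono hcover)
  obtain ⟨w, hw, hwy⟩ : ∃ w ∈ W, closure (W • {y}) ∈ 𝓝 (w • y) := by
    simpa [isNowhereDense_iff_forall_notMem_nhds, smul_singleton] using
      mt IsNowhereDense.isMeagre hWy
  have := smul_mem_nhds_smul w⁻¹ hwy
  rw [inv_smul_smul, ← closure_smul, ← smul_assoc] at this
  refine mem_of_superset this (closure_mono (smul_subset_smul_right ?_))
  exact (smul_set_subset_mul (inv_mem_inv.2 hw)).trans hWV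

theorem isOpenMap_orbit_of_forall_exists_nhds {x : X}
    (h : ∀ g : G, ∀ U ∈ 𝓝 (1 : G), ∃ T ∈ 𝓝 (g • x), (orbit G x : Set X) ∩ T ⊆ U • {g • x}) :
    IsOpenMap fun g : G => (⟨g • x, mem_orbit x g⟩ : orbit G x) := by
  rw [isOpenMap_iff_nhds_le]
  intro g S hS
  obtain ⟨T, hT, hTU⟩ := h g _ ((continuous_mul_const g).tendsto' 1 g (one_mul g) hS)
  refine (mem_nhds_subtype _ _ _).2 ⟨T, hT, fun ⟨z, hz⟩ hzT => ?_⟩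
  obtain ⟨k, hk, _, rfl, rfl⟩ := hTU ⟨hz, hzT⟩
  simpa [mul_smul] using hk

end TopologicalGroup

section Metric

variable {G X : Type*} [Group G] [MetricSpace G] [MetricSpace X] [MulAction G X] {x : X}

/-- The recursion multiplies `u` on the right by elements of this set: this keeps the sequence
`uₙ` Cauchy, and the closure of `smallShifts x u r • {x}` pins `uₙ⁻¹ • pₙ • z` near `x`. -/
def smallShifts (x : X) (u : G) (r : ℝ) : Set G :=
  {b | dist (b • x) x < r ∧ dist (u * b) u < r}

theorem closure_smallShifts_smul_subset_closedBall (x : X) (u : G) (r : ℝ) :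
    closure (smallShifts x u r • ({x} : Set X)) ⊆ Metric.closedBall x r := by
  refine (closure_mono ?_).trans Metric.closure_ball_subset_closedBall
  rw [smul_singleton]
  rintro _ ⟨b, hb, rfl⟩
  exact hb.1

variable [ContinuousSMul G X]

theorem smul_eq_of_tendsto_of_mem_closure_smallShifts {z : X} {u p : ℕ → G} {r : ℕ → ℝ}
    (h : ∀ n, p n • z ∈ u n • closure (smallShifts x (u n) (r n) • ({x} : Set X)))
    (hr : Tendsto r atTop (𝓝 0)) {a c : G} (ha : Tendsto u atTop (𝓝 a))
    (hc : Tendsto p atTop (𝓝 c)) : a • x = c • z := by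
  have hs : Tendsto (fun n => (u n)⁻¹ • p n • z) atTop (𝓝 x) := by
    rw [tendsto_iff_dist_tendsto_zero]
    refine squeeze_zero (fun _ => dist_nonneg) (fun n => ?_) hr
    exact closure_smallShifts_smul_subset_closedBall _ _ _
      (mem_smul_set_iff_inv_smul_mem.1 (h n))
  refine tendsto_nhds_unique (ha.smul hs) ?_
  simpa using hc.smul (tendsto_const_nhds (x := z))

variable [IsTopologicalGroup G]

theorem smallShifts_mem_nhds_one (x : X) (u : G) {r : ℝ} (hr : 0 < r) :
    smallShifts x u r ∈ 𝓝 (1 : G) := by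
  have hx : IsOpen {b : G | dist (b • x) x < r} := isOpen_lt (by fun_prop) continuous_const
  have hu : IsOpen {b : G | dist (u * b) u < r} := isOpen_lt (by fun_prop) continuous_const
  exact (hx.inter hu).mem_nhds ⟨by simpa using hr, by simpa using hr⟩

theorem exists_smallShifts_step
    (hA : ∀ y ∈ orbit G x, ∀ V ∈ 𝓝 (1 : G), closure (V • ({y} : Set X)) ∈ 𝓝 y)
    {z : X} (hz : z ∈ orbit G x) {r r' : ℝ} (hr : 0 < r) (hr' : 0 < r') {u p : G}
    (h : p • z ∈ u • interior (closure (smallShifts x u r • ({x} : Set X)))) :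
    ∃ u' p' : G, p' • z ∈ u' • interior (closure (smallShifts x u' r' • ({x} : Set X))) ∧
      dist u u' ≤ r ∧ dist p p' ≤ r := by
  set O := ⋃ b ∈ smallShifts x u r, (u * b) • interior (closure (smallShifts x (u * b) r' • {x}))
  have hO : IsOpen O := isOpen_biUnion fun b _ => isOpen_interior.smul _
  have hxO : u • (smallShifts x u r • ({x} : Set X)) ⊆ O := by
    rw [smul_singleton]
    rintro _ ⟨_, ⟨b, hb, rfl⟩, rfl⟩
    refine mem_biUnion hb ?_
    show u • b • x ∈ _
    rw [smul_smul]
    exact smul_mem_smul_set (mem_interior_iff_mem_nhds.2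
      (hA x (mem_orbit_self x) _ (smallShifts_mem_nhds_one x _ hr')))
  have hpz : p • z ∈ closure O := by
    refine closure_mono hxO ?_
    rw [closure_smul]
    exact smul_set_mono interior_subset h
  have hW : {w : G | dist (w * p) p < r} ∈ 𝓝 (1 : G) :=
    (isOpen_lt (by fun_prop) continuous_const).mem_nhds (by simpa using hr)
  have hpz_orbit : p • z ∈ orbit G x := by
    obtain ⟨g, rfl⟩ := hz
    exact ⟨p * g, mul_smul p g x⟩
  obtain ⟨_, ⟨w, hw, _, rfl, rfl⟩, hwO⟩ := (closure_inter_open_nonempty_iff hO).1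
    (mem_closure_iff_nhds.1 hpz _ (hA _ hpz_orbit _ hW))
  obtain ⟨b, hb, hmem⟩ := mem_iUnion₂.1 hwO
  refine ⟨u * b, w * p, by rw [mul_smul w p z]; exact hmem, ?_, ?_⟩
  · rw [dist_comm]
    exact hb.2.le
  · rw [dist_comm]
    exact hw.le

theorem exists_nhds_orbit_inter_subset_smul [CompleteSpace G]
    (hA : ∀ y ∈ orbit G x, ∀ V ∈ 𝓝 (1 : G), closure (V • ({y} : Set X)) ∈ 𝓝 y)
    {U : Set G} (hU : U ∈ 𝓝 (1 : G)) :
    ∃ T ∈ 𝓝 x, (orbit G x : Set X) ∩ T ⊆ U • {x} := by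
  obtain ⟨W, hW, hWU⟩ := exists_mem_nhds_one_inv_mul_subset hU
  obtain ⟨ε, hε, hεW⟩ := Metric.nhds_basis_closedBall.mem_iff.1 hW
  set r : ℕ → ℝ := fun n => ε / 2 / 2 ^ n
  have hr : ∀ n, 0 < r n := fun n => by positivity
  refine ⟨interior (closure (smallShifts x 1 (r 0) • {x})),
    interior_mem_nhds.2 (hA x (mem_orbit_self x) _ (smallShifts_mem_nhds_one x 1 (hr 0))), ?_⟩
  rintro z ⟨hz, hzT⟩
  obtain ⟨q, hq0, hq⟩ := exists_seq_of_forall_exists_succ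
    (P := fun n q => q.2 • z ∈ q.1 • interior (closure (smallShifts x q.1 (r n) • {x})))
    (R := fun n q q' => dist q.1 q'.1 ≤ r n ∧ dist q.2 q'.2 ≤ r n) (a := ((1 : G), (1 : G)))
    (by simpa using hzT) fun n q hq => by
      obtain ⟨u', p', h⟩ := exists_smallShifts_step hA hz (hr n) (hr (n + 1)) hq
      exact ⟨(u', p'), h⟩
  have hu : ∀ n, dist (q n).1 (q (n + 1)).1 ≤ ε / 2 / 2 ^ n := fun n => (hq n).2.1
  have hp : ∀ n, dist (q n).2 (q (n + 1)).2 ≤ ε / 2 / 2 ^ n := fun n => (hq n).2.2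
  obtain ⟨a, ha⟩ := cauchySeq_tendsto_of_complete (cauchySeq_of_le_geometric_two hu)
  obtain ⟨c, hc⟩ := cauchySeq_tendsto_of_complete (cauchySeq_of_le_geometric_two hp)
  have hac : a • x = c • z := smul_eq_of_tendsto_of_mem_closure_smallShifts
    (fun n => smul_set_mono interior_subset (hq n).1)
    (tendsto_const_nhds.div_atTop (tendsto_pow_atTop_atTop_of_one_lt one_lt_two)) ha hc
  have haW : a ∈ W := hεW (by
    simpa [hq0, dist_comm] using dist_le_of_le_geometric_two_of_tendsto₀ hu ha)
  have hcW : c ∈ W := hεW (by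
    simpa [hq0, dist_comm] using dist_le_of_le_geometric_two_of_tendsto₀ hp hc)
  exact ⟨c⁻¹ * a, hWU (mul_mem_mul (inv_mem_inv.2 hcW) haW), x, rfl,
    show (c⁻¹ * a) • x = z by rw [mul_smul, hac, inv_smul_smul]⟩

end Metric

theorem stmt_11 {G X : Type*} [Group G] [TopologicalSpace G] [IsTopologicalGroup G]
    [PolishSpace G] [TopologicalSpace X] [PolishSpace X]
    [MulAction G X] [ContinuousSMul G X] (x : X)
    (hnm : ¬ IsMeagre (MulAction.orbit G x : Set X)) :
    IsOpenMap fun g : G =>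
      (⟨g • x, MulAction.mem_orbit x g⟩ : MulAction.orbit G x) := by
  let := TopologicalSpace.upgradeIsCompletelyMetrizable G
  let := TopologicalSpace.upgradeIsCompletelyMetrizable X
  refine isOpenMap_orbit_of_forall_exists_nhds fun g U hU => ?_
  rw [← orbit_smul g x] at hnm ⊢
  exact exists_nhds_orbit_inter_subset_smul
    (fun y hy V hV => closure_smul_singleton_mem_nhds_of_not_isMeagre_orbit hnm hy hV) hU
end

section
/- With G a Polish group and {U_q : q ∈ ℚ} a countable family of pairwise disjoint nonempty regular open subsets of G, the subgroup G₁ = {g ∈ G : right translation by g⁻¹ and by g each map the family {U_q} into itself} is a Gδ subset of G, hence a closed subgroup of G. -/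
/-!
For regular open `A` and `B`, the open set `A · g` lies in `B` as soon as it lies in `closure B`,
so `{g | A · g = B}` is closed, while `{g | A · g ∩ B ≠ ∅}` is open. As the `U q` are nonempty and
pairwise disjoint, `U q · g = U r` can only hold for the unique `r` with `U q · g ∩ U r ≠ ∅`, which
makes the countable union over `r` of these closed sets a Gδ set.

A Gδ subgroup `H` of a Polish group is a dense Gδ subset of its closure, which is a Baire group; there
`H` meets each of its right cosets, so `H` is the whole closure.
-/

open Set

theorem isGδ_iUnion_of_isClosed_of_isOpen {X ι : Type*} [TopologicalSpace X] [PerfectlyNormalSpace X]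
    [Countable ι] {E N : ι → Set X} (hE : ∀ i, IsClosed (E i)) (hN : ∀ i, IsOpen (N i))
    (hEN : ∀ i, E i ⊆ N i) (hdisj : ∀ i j, i ≠ j → Disjoint (E i) (N j)) :
    IsGδ (⋃ i, E i) := by
  have h : ⋃ i, E i = (⋃ i, N i) ∩ ⋂ i, ((N i)ᶜ ∪ E i) := by
    ext x
    simp only [mem_iUnion, mem_inter_iff, mem_iInter, mem_union, mem_compl_iff]
    constructor
    · rintro ⟨i, hi⟩
      refine ⟨⟨i, hEN i hi⟩, fun j => ?_⟩
      by_cases hij : i = j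
      · exact Or.inr (hij ▸ hi)
      · exact Or.inl fun hj => disjoint_left.1 (hdisj i j hij) hi hj
    · rintro ⟨⟨i, hi⟩, h⟩
      exact ⟨i, (h i).resolve_left (not_not_intro hi)⟩
  rw [h]
  exact (isOpen_iUnion hN).isGδ.inter
    (.iInter fun i => ((hN i).isClosed_compl.union (hE i)).isGδ)

section BaireGroup

variable {G : Type*} [Group G] [TopologicalSpace G]

theorem Subgroup.eq_top_of_dense_of_isGδ [ContinuousMul G] [BaireSpace G] (H : Subgroup G)
    (hd : Dense (H : Set G)) (hH : IsGδ (H : Set G)) : H = ⊤ := by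
  refine eq_top_iff.2 fun k _ => ?_
  obtain ⟨x, hx, hxk⟩ := (hd.inter_of_Gδ hH (hH.preimage (continuous_mul_const k⁻¹))
    (hd.preimage (isOpenMap_mul_right k⁻¹))).nonempty
  simpa using H.mul_mem (H.inv_mem hxk) hx

theorem Subgroup.isClosed_of_isGδ [IsTopologicalGroup G] [PolishSpace G] (H : Subgroup G)
    (hH : IsGδ (H : Set G)) : IsClosed (H : Set G) := by
  let K := H.topologicalClosure
  have : PolishSpace K := H.isClosed_topologicalClosure.polishSpace
  have hdense : Dense (H.subgroupOf K : Set K) := by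
    refine Subtype.dense_iff.2 (_root_.closure_mono fun h hh => ?_)
    exact ⟨⟨h, H.le_topologicalClosure hh⟩, hh, rfl⟩
  have htop := (H.subgroupOf K).eq_top_of_dense_of_isGδ hdense
    (hH.preimage (f := ((↑) : K → G)) continuous_subtype_val)
  refine closure_subset_iff_isClosed.1 fun h hh => ?_
  exact (show (⟨h, hh⟩ : K) ∈ H.subgroupOf K from htop ▸ Subgroup.mem_top _)

end BaireGroup

section RegularOpen

variable {G : Type*} [Group G] [TopologicalSpace G] [ContinuousMul G]

theorem isClosed_setOf_image_mul_right_subset_s14 {A B : Set G} (hA : IsOpen A)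
    (hB : interior (closure B) = B) : IsClosed {g | (· * g) '' A ⊆ B} := by
  have h : {g | (· * g) '' A ⊆ B} = ⋂ u ∈ A, (u * ·) ⁻¹' closure B := by
    ext g
    have hopen : IsOpen ((· * g) '' A) := isOpenMap_mul_right g A hA
    simp only [mem_iInter, mem_preimage, mem_ofPred_eq]
    exact ⟨fun h u hu => subset_closure (h (mem_image_of_mem _ hu)),
      fun h => hB ▸ interior_maximal (image_subset_iff.2 h) hopen⟩
  rw [h]
  exact isClosed_biInter fun u _ => isClosed_closure.preimage (continuous_const_mul u)

theorem isClosed_setOf_image_mul_right_eq_s14 [ContinuousInv G] {A B : Set G} (hA : interior (closure A) = A)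
    (hB : interior (closure B) = B) : IsClosed {g | (· * g) '' A = B} := by
  have h : {g | (· * g) '' A = B} =
      {g | (· * g) '' A ⊆ B} ∩ (·⁻¹) ⁻¹' {g | (· * g) '' B ⊆ A} := by
    ext g
    simp only [mem_ofPred_eq, mem_inter_iff, mem_preimage, image_subset_iff, ← image_mul_right,
      subset_antisymm_iff]
  rw [h]
  exact (isClosed_setOf_image_mul_right_subset_s14 (hA ▸ isOpen_interior) hB).inter
    ((isClosed_setOf_image_mul_right_subset_s14 (hB ▸ isOpen_interior) hA).preimage continuous_inv)

theorem isOpen_setOf_image_mul_right_inter_nonempty (A : Set G) {B : Set G} (hB : IsOpen B) :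
    IsOpen {g | ((· * g) '' A ∩ B).Nonempty} := by
  have h : {g | ((· * g) '' A ∩ B).Nonempty} = ⋃ u ∈ A, (u * ·) ⁻¹' B := by
    ext g
    simp only [mem_ofPred_eq, Set.Nonempty, mem_inter_iff, exists_mem_image, mem_iUnion,
      mem_preimage, exists_prop]
  rw [h]
  exact isOpen_biUnion fun u _ => hB.preimage (continuous_const_mul u)

theorem isGδ_setOf_forall_exists_image_mul_right_eq [ContinuousInv G] [PerfectlyNormalSpace G]
    {ι : Type*} [Countable ι] (U : ι → Set G) (hne : ∀ i, (U i).Nonempty)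
    (hro : ∀ i, interior (closure (U i)) = U i)
    (hdisj : ∀ i j, i ≠ j → Disjoint (U i) (U j)) :
    IsGδ {g | ∀ i, ∃ j, (· * g) '' U i = U j} := by
  rw [ofPred_forall]
  refine .iInter fun i => ofPred_exists _ ▸ isGδ_iUnion_of_isClosed_of_isOpen
    (fun j => isClosed_setOf_image_mul_right_eq_s14 (hro i) (hro j))
    (fun j => isOpen_setOf_image_mul_right_inter_nonempty _ (hro j ▸ isOpen_interior))
    (fun j g (hg : (· * g) '' U i = U j) => by rw [mem_ofPred_eq, hg, inter_self]; exact hne j)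
    fun j k hjk => disjoint_left.2 fun g (hj : (· * g) '' U i = U j) hk => ?_
  rw [mem_ofPred_eq, hj, (hdisj j k hjk).inter_eq] at hk
  exact hk.ne_empty rfl

end RegularOpen

section Stabilizer

variable {G ι : Type*} [Group G]

theorem exists_image_mul_right_mul_eq {U : ι → Set G} {a b : G}
    (ha : ∀ i, ∃ j, (· * a) '' U i = U j) (hb : ∀ i, ∃ j, (· * b) '' U i = U j) (i : ι) :
    ∃ j, (· * (a * b)) '' U i = U j := by
  obtain ⟨j, hj⟩ := ha i
  obtain ⟨k, hk⟩ := hb j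
  refine ⟨k, ?_⟩
  rw [← hk, ← hj, image_image]
  simp only [mul_assoc]

def mulRightStabilizer (U : ι → Set G) : Subgroup G where
  carrier := {g | (∀ i, ∃ j, (· * g⁻¹) '' U i = U j) ∧ ∀ i, ∃ j, (· * g) '' U i = U j}
  one_mem' := by simp
  mul_mem' := fun {a b} ha hb =>
    ⟨mul_inv_rev a b ▸ exists_image_mul_right_mul_eq hb.1 ha.1,
      exists_image_mul_right_mul_eq ha.2 hb.2⟩
  inv_mem' := fun {g} hg => ⟨(inv_inv g).symm ▸ hg.2, hg.1⟩

end Stabilizer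

theorem stmt_14 {G : Type*} [Group G] [TopologicalSpace G] [IsTopologicalGroup G]
    [PolishSpace G] (U : ℚ → Set G)
    (hne : ∀ q, (U q).Nonempty)
    (hro : ∀ q, interior (closure (U q)) = U q)
    (hdisj : ∀ q r : ℚ, q ≠ r → Disjoint (U q) (U r)) :
    IsGδ {g : G | (∀ q : ℚ, ∃ r : ℚ, (fun u => u * g⁻¹) '' U q = U r) ∧
        (∀ q : ℚ, ∃ r : ℚ, (fun u => u * g) '' U q = U r)} ∧
      IsClosed {g : G | (∀ q : ℚ, ∃ r : ℚ, (fun u => u * g⁻¹) '' U q = U r) ∧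
        (∀ q : ℚ, ∃ r : ℚ, (fun u => u * g) '' U q = U r)} := by
  have hM := isGδ_setOf_forall_exists_image_mul_right_eq U hne hro hdisj
  have hG₁ : IsGδ (mulRightStabilizer U : Set G) := (hM.preimage continuous_inv).inter hM
  exact ⟨hG₁, (mulRightStabilizer U).isClosed_of_isGδ hG₁⟩
end
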